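/- arXiv:0706.1034 — 5 statements merged into one kernel-verified Lean document; each statement's English description precedes it below -/
import Mathlib

section
/- For every Young diagram μ with |μ| = m and every Young diagram ν with |ν| = n+1 (where n ≥ 0), one has ∑_{κ : κ ↗ ν} (dim κ / dim ν) · FS_μ(κ) = ((n+1−m)/(n+1)) · FS_μ(ν). (This says that the 'down' transition operator p↓(ν,κ) = dim κ/dim ν maps the restriction of the Frobenius–Schur function FS_μ to diagrams with n boxes to ((n+1−m)/(n+1)) times its restriction to diagrams with n+1 boxes.) -/
/-!
Deleting the last step of a chain `μ ↗ ⋯ ↗ ν` gives `dim(μ,ν) = ∑_{κ ↗ ν} dim(μ,κ)` as soon as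
`|μ| ≤ n`. Writing `(x)_m` for the falling factorial, `dim κ · FS_μ(κ) = (n)_m dim(μ,κ)`, so the
left side equals `(n)_m dim(μ,ν) / dim ν`; this also holds for `m > n`, where `(n)_m = 0`.
The identity `(n+1-m) (n+1)_m = (n+1) (n)_m` turns it into the right side.
-/

/-- `μ ↗ ν` : the Young diagram `ν` is obtained from `μ` by adding one box. -/
def YoungDiagram.Covers (μ ν : YoungDiagram) : Prop :=
  μ ≤ ν ∧ ν.card = μ.card + 1

/-- `dim(μ,λ)`: the number of saturated chains `μ = ν₀ ↗ ν₁ ↗ … ↗ ν_{|λ|-|μ|} = λ`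
(the number of standard Young tableaux of skew shape `λ/μ`); it vanishes when `μ ⊄ λ`. -/
noncomputable def YoungDiagram.skewDim (μ l : YoungDiagram) : ℕ :=
  Nat.card {f : Fin (l.card - μ.card + 1) → YoungDiagram //
    f 0 = μ ∧ f (Fin.last _) = l ∧
    ∀ i : Fin (l.card - μ.card), YoungDiagram.Covers (f i.castSucc) (f i.succ)}

/-- `dim λ`: the number of standard Young tableaux of shape `λ`. -/
noncomputable def YoungDiagram.dim (l : YoungDiagram) : ℕ :=
  YoungDiagram.skewDim ⊥ l

/-- The value `FS_μ(λ)` of the Frobenius–Schur function: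
`FS_μ(λ) = n(n-1)⋯(n-m+1) · dim(μ,λ)/dim λ` where `n = |λ|`, `m = |μ|`. -/
noncomputable def YoungDiagram.FS (μ l : YoungDiagram) : ℝ :=
  (∏ i ∈ Finset.range μ.card, ((l.card : ℝ) - (i : ℝ))) * (μ.skewDim l : ℝ) / (l.dim : ℝ)

/-- `(w)_{λ/μ} = ∏_{(i,j) ∈ λ∖μ} (w + j - i)`, the product of `w` shifted by the contents
of the boxes of the skew diagram `λ/μ`. -/
noncomputable def YoungDiagram.poch (w : ℂ) (μ l : YoungDiagram) : ℂ :=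
  ∏ b ∈ l.cells \ μ.cells, (w + (b.2 : ℂ) - (b.1 : ℂ))

lemma descPochhammer_eval_mul_sub {R : Type*} [CommRing R] (x : R) (m : ℕ) :
    (descPochhammer R m).eval x * (x - m) = x * (descPochhammer R m).eval (x - 1) := by
  rw [← descPochhammer_succ_eval, descPochhammer_succ_left]
  simp

namespace YoungDiagram

lemma finite_setOf_covers (ν : YoungDiagram) : {κ | Covers κ ν}.Finite :=
  (ν.cells.powerset.finite_toSet.preimage
    (fun _ _ _ _ h => YoungDiagram.ext h)).subset fun κ hκ => by simpa using hκ.1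

instance (ν : YoungDiagram) : Finite {κ // Covers κ ν} := (finite_setOf_covers ν).to_subtype

def Chain (μ : YoungDiagram) (k : ℕ) (l : YoungDiagram) : Type :=
  {f : Fin (k + 1) → YoungDiagram //
    f 0 = μ ∧ f (Fin.last k) = l ∧ ∀ i : Fin k, Covers (f i.castSucc) (f i.succ)}

lemma skewDim_eq_card_chain (μ l : YoungDiagram) :
    μ.skewDim l = Nat.card (Chain μ (l.card - μ.card) l) := rfl

def chainSuccEquiv (μ ν : YoungDiagram) (k : ℕ) :
    Chain μ (k + 1) ν ≃ Σ κ : {κ // Covers κ ν}, Chain μ k κ where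
  toFun f := ⟨⟨f.1 (Fin.last k).castSucc, by simpa [f.2.2.1] using f.2.2.2 (Fin.last k)⟩,
    ⟨Fin.init f.1, by simpa [Fin.init] using f.2.1, rfl, fun i => f.2.2.2 i.castSucc⟩⟩
  invFun g := ⟨Fin.snoc g.2.1 ν, (Fin.snoc_castSucc (i := 0) ..).trans g.2.2.1, Fin.snoc_last _ _,
    Fin.lastCases (by rw [Fin.snoc_castSucc, Fin.succ_last, Fin.snoc_last, g.2.2.2.1]; exact g.1.2)
      fun i => by rw [Fin.snoc_castSucc, ← Fin.castSucc_succ, Fin.snoc_castSucc]; exact g.2.2.2.2 i⟩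
  left_inv f := Subtype.ext <| by
    simpa only [← f.2.2.1] using Fin.snoc_init_self f.1
  right_inv g := Sigma.subtype_ext (Subtype.ext (by simpa using g.2.2.2.1))
    (Fin.init_snoc (α := fun _ => YoungDiagram) ν g.2.1)

instance Chain.finite (μ : YoungDiagram) (k : ℕ) (l : YoungDiagram) : Finite (Chain μ k l) := by
  induction k generalizing l with
  | zero =>
    refine @Finite.of_subsingleton _ ⟨fun f g => Subtype.ext (funext fun i => ?_)⟩
    rw [Subsingleton.elim (α := Fin 1) i 0, f.2.1, g.2.1]
  | succ k ih =>
    have := fun κ : {κ // Covers κ l} => ih κ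
    exact Finite.of_equiv _ (chainSuccEquiv μ l k).symm

lemma card_chain_succ (μ ν : YoungDiagram) (k : ℕ) :
    Nat.card (Chain μ (k + 1) ν) = ∑ᶠ (κ) (_ : Covers κ ν), Nat.card (Chain μ k κ) := by
  have := Fintype.ofFinite {κ // Covers κ ν}
  rw [Nat.card_congr (chainSuccEquiv μ ν k), Nat.card_sigma, ← finsum_eq_sum_of_fintype]
  exact finsum_subtype_eq_finsum_cond (f := fun κ => Nat.card (Chain μ k κ)) _

lemma skewDim_eq_finsum_covers {μ ν : YoungDiagram} {n : ℕ} (hμ : μ.card ≤ n)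
    (hν : ν.card = n + 1) : μ.skewDim ν = ∑ᶠ (κ) (_ : Covers κ ν), μ.skewDim κ := by
  rw [skewDim_eq_card_chain, hν, Nat.sub_add_comm hμ, card_chain_succ]
  refine finsum_congr fun κ => finsum_congr fun hκ => ?_
  rw [skewDim_eq_card_chain, show κ.card = n by have := hκ.2; omega]

/-- A cell of `ν \ μ` maximizing `i + j` is a removable corner of `ν`. -/
lemma exists_covers_of_lt {μ ν : YoungDiagram} (h : μ < ν) : ∃ κ, μ ≤ κ ∧ Covers κ ν := by
  obtain ⟨c, hc, hmax⟩ := Finset.exists_max_image (ν.cells \ μ.cells) (fun c => c.1 + c.2)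
    (Finset.sdiff_nonempty.mpr (cells_ssubset_iff.mpr h).not_subset)
  rw [Finset.mem_sdiff] at hc
  have hlower : IsLowerSet ((ν.cells.erase c : Finset (ℕ × ℕ)) : Set (ℕ × ℕ)) := by
    intro a b hba ha
    simp only [Finset.coe_erase, Set.mem_sdiff, Finset.mem_coe, Set.mem_singleton_iff] at ha ⊢
    refine ⟨ν.isLowerSet hba ha.1, ?_⟩
    rintro rfl
    have ha_notin_μ : a ∉ μ.cells := fun ha' => hc.2 (μ.isLowerSet hba ha')
    have hsum_le := hmax a (Finset.mem_sdiff.mpr ⟨ha.1, ha_notin_μ⟩)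
    obtain ⟨h1, h2⟩ := Prod.le_def.mp hba
    exact ha.2 (Prod.ext (by omega) (by omega))
  refine ⟨⟨ν.cells.erase c, hlower⟩, fun x hx => ?_, Finset.erase_subset c ν.cells, ?_⟩
  · exact Finset.mem_erase.mpr ⟨fun hxc => hc.2 (hxc ▸ hx), h.le hx⟩
  · show ν.cells.card = (ν.cells.erase c).card + 1
    rw [Finset.card_erase_add_one hc.1]

lemma nonempty_chain_of_le {μ ν : YoungDiagram} {k : ℕ} (h : μ ≤ ν)
    (hk : ν.card = μ.card + k) : Nonempty (Chain μ k ν) := by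
  induction k generalizing ν with
  | zero =>
    obtain rfl : μ = ν := YoungDiagram.ext (Finset.eq_of_subset_of_card_le h hk.le)
    exact ⟨⟨fun _ => μ, rfl, rfl, fun i => i.elim0⟩⟩
  | succ k ih =>
    have hlt : μ < ν := lt_of_le_of_ne h fun hμν => by subst hμν; omega
    obtain ⟨κ, hμκ, hκ⟩ := exists_covers_of_lt hlt
    obtain ⟨g⟩ := ih hμκ (by have := hκ.2; omega)
    exact ⟨(chainSuccEquiv μ ν k).symm ⟨⟨κ, hκ⟩, g⟩⟩

lemma skewDim_pos {μ ν : YoungDiagram} (h : μ ≤ ν) : 0 < μ.skewDim ν := by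
  rw [skewDim_eq_card_chain]
  have := nonempty_chain_of_le h (Nat.add_sub_of_le (Finset.card_le_card h)).symm
  exact Nat.card_pos

lemma dim_pos (ν : YoungDiagram) : 0 < ν.dim := skewDim_pos bot_le

lemma dim_mul_FS (μ κ : YoungDiagram) :
    (κ.dim : ℝ) * μ.FS κ = (descPochhammer ℝ μ.card).eval (κ.card : ℝ) * μ.skewDim κ := by
  have : (κ.dim : ℝ) ≠ 0 := Nat.cast_ne_zero.mpr (dim_pos κ).ne'
  rw [FS, descPochhammer_eval_eq_prod_range]
  field_simp

lemma finsum_covers_dim_mul_FS (μ : YoungDiagram) {ν : YoungDiagram} {n : ℕ}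
    (hν : ν.card = n + 1) :
    ∑ᶠ (κ) (_ : Covers κ ν), (κ.dim : ℝ) * μ.FS κ
      = (descPochhammer ℝ μ.card).eval (n : ℝ) * μ.skewDim ν := by
  calc ∑ᶠ (κ) (_ : Covers κ ν), (κ.dim : ℝ) * μ.FS κ
      = ∑ᶠ (κ) (_ : Covers κ ν), (descPochhammer ℝ μ.card).eval (n : ℝ) * μ.skewDim κ :=
        finsum_congr fun κ => finsum_congr fun hκ => by
          rw [dim_mul_FS, show κ.card = n by have := hκ.2; omega]
    _ = (descPochhammer ℝ μ.card).eval (n : ℝ) * ∑ᶠ (κ) (_ : Covers κ ν), (μ.skewDim κ : ℝ) :=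
        (mul_finsum_mem (s := {κ | Covers κ ν}) _ _).symm
    _ = (descPochhammer ℝ μ.card).eval (n : ℝ) * μ.skewDim ν := by
        rcases le_or_gt μ.card n with hμ | hμ
        · rw [skewDim_eq_finsum_covers hμ hν]
          exact congrArg _ (Nat.cast_finsum_mem (finite_setOf_covers ν) _).symm
        · rw [descPochhammer_eval_eq_descFactorial, Nat.descFactorial_eq_zero_iff_lt.mpr hμ]
          simp

end YoungDiagram

open YoungDiagram in
/-- The "down" transition operator `p↓(ν,κ) = dim κ / dim ν` maps the
Frobenius–Schur function `FS_μ` restricted to diagrams with `n` boxes to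
`((n+1-m)/(n+1))` times its restriction to diagrams with `n+1` boxes:
for `|μ| = m` and `|ν| = n+1`,
`∑_{κ ↗ ν} (dim κ / dim ν) FS_μ(κ) = ((n+1-m)/(n+1)) FS_μ(ν)`. -/
theorem down_operator_on_FS (μ ν : YoungDiagram) (m n : ℕ)
    (hm : μ.card = m) (hn : ν.card = n + 1) :
    ∑ᶠ (κ : YoungDiagram) (_ : Covers κ ν), ((κ.dim : ℝ) / (ν.dim : ℝ)) * μ.FS κ
      = (((n : ℝ) + 1 - (m : ℝ)) / ((n : ℝ) + 1)) * μ.FS ν := by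
  subst hm
  have hν : (ν.dim : ℝ) ≠ 0 := Nat.cast_ne_zero.mpr (dim_pos ν).ne'
  have hfalling := descPochhammer_eval_mul_sub ((n : ℝ) + 1) μ.card
  rw [add_sub_cancel_right] at hfalling
  calc ∑ᶠ (κ) (_ : Covers κ ν), (κ.dim / ν.dim : ℝ) * μ.FS κ
      = (∑ᶠ (κ) (_ : Covers κ ν), (κ.dim : ℝ) * μ.FS κ) * (ν.dim : ℝ)⁻¹ := by
        simp_rw [div_mul_eq_mul_div, div_eq_mul_inv]
        exact (finsum_mem_mul (s := {κ | Covers κ ν}) _ _).symm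
    _ = (descPochhammer ℝ μ.card).eval (n : ℝ) * μ.skewDim ν / ν.dim := by
        rw [finsum_covers_dim_mul_FS μ hn, div_eq_mul_inv]
    _ = (((n : ℝ) + 1 - μ.card) / ((n : ℝ) + 1)) * μ.FS ν := by
        rw [div_eq_iff hν, mul_assoc, mul_comm (μ.FS ν), dim_mul_FS, hn]
        push_cast
        field_simp
        linear_combination -(μ.skewDim ν : ℝ) * hfalling
end

section
/- Let c > 0 and s be real numbers and let A be the operator on R = ℝ[q_1, q_2, …] defined below. Then R is the direct sum of the eigenspaces of A; the eigenvalues of A are exactly 0 and −m(m−1+c) for integers m ≥ 2; the eigenspace for the eigenvalue 0 is one-dimensional and consists of the constants; and for each integer m ≥ 2 the eigenspace for the eigenvalue −m(m−1+c) has dimension equal to the number of partitions of m all of whose parts are ≥ 2. -/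
open MvPolynomial

noncomputable def qv (i : ℕ) : MvPolynomial ℕ+ ℝ :=
  if h : 0 < i then X (⟨i, h⟩ : ℕ+) else 1

section SupportLemmas

lemma supp_single (f : MvPolynomial ℕ+ ℝ) (co : ℕ+ → ℝ) (Q : ℕ+ → MvPolynomial ℕ+ ℝ) :
    (Function.support fun i : ℕ+ => co i • (Q i * pderiv i f)).Finite := by
  apply Set.Finite.subset f.vars.finite_toSet
  intro i hi
  simp only [Function.mem_support] at hi
  by_contra hmem
  exact hi (by rw [pderiv_eq_zero_of_notMem_vars hmem, mul_zero, smul_zero])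

lemma supp_double (f : MvPolynomial ℕ+ ℝ) (co : ℕ+ × ℕ+ → ℝ)
    (Q : ℕ+ × ℕ+ → MvPolynomial ℕ+ ℝ) :
    (Function.support fun p : ℕ+ × ℕ+ =>
      co p • (Q p * pderiv p.1 (pderiv p.2 f))).Finite := by
  apply Set.Finite.subset
    (Set.Finite.biUnion f.vars.finite_toSet
      (fun j _ => Set.Finite.image (fun i => (i, j)) (pderiv j f).vars.finite_toSet))
  intro p hp
  simp only [Function.mem_support] at hp
  have h2 : pderiv p.2 f ≠ 0 := by
    intro h
    exact hp (by rw [h, map_zero, mul_zero, smul_zero])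
  have h2v : p.2 ∈ f.vars := by
    by_contra h; exact h2 (pderiv_eq_zero_of_notMem_vars h)
  have h1 : p.1 ∈ (pderiv p.2 f).vars := by
    by_contra h
    exact hp (by rw [pderiv_eq_zero_of_notMem_vars h, mul_zero, smul_zero])
  exact Set.mem_biUnion h2v ⟨p.1, h1, rfl⟩

lemma supp_pair (f : MvPolynomial ℕ+ ℝ) (co : ℕ × ℕ → ℝ) (Q : ℕ × ℕ → MvPolynomial ℕ+ ℝ) :
    (Function.support fun p : ℕ × ℕ =>
      co p • (Q p * pderiv ((p.1 + p.2 + 2).toPNat (by omega)) f)).Finite := by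
  apply Set.Finite.subset
    (Set.Finite.biUnion f.vars.finite_toSet
      (fun v _ => Set.Finite.subset
        (Finset.range ((v : ℕ) + 1) ×ˢ Finset.range ((v : ℕ) + 1)).finite_toSet
        (fun p (hp : p.1 + p.2 + 2 = (v : ℕ)) => by
          simp only [Finset.coe_product, Set.mem_prod, Finset.mem_coe, Finset.mem_range]
          omega)))
  intro p hp
  simp only [Function.mem_support] at hp
  have hv : (p.1 + p.2 + 2).toPNat (by omega) ∈ f.vars := by
    by_contra h
    exact hp (by rw [pderiv_eq_zero_of_notMem_vars h, mul_zero, smul_zero])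
  refine Set.mem_biUnion hv ?_
  show p.1 + p.2 + 2 = _
  rfl

end SupportLemmas

noncomputable def Afun (c s : ℝ) (f : MvPolynomial ℕ+ ℝ) : MvPolynomial ℕ+ ℝ :=
  (∑ᶠ p : ℕ+ × ℕ+,
      ((((p.1 : ℕ) : ℝ) + 1) * (((p.2 : ℕ) : ℝ) + 1)) •
        ((qv ((p.1 : ℕ) + (p.2 : ℕ)) - qv (p.1 : ℕ) * qv (p.2 : ℕ)) *
          pderiv p.1 (pderiv p.2 f)))
    - c • (∑ᶠ i : ℕ+, (((i : ℕ) : ℝ) + 1) • (qv (i : ℕ) * pderiv i f))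
    + s • (∑ᶠ i : ℕ+, (((i : ℕ) : ℝ) + 1) • (qv ((i : ℕ) - 1) * pderiv i f))
    + (∑ᶠ p : ℕ × ℕ,
        ((p.1 : ℝ) + (p.2 : ℝ) + 3) •
          (qv p.1 * qv p.2 * pderiv ((p.1 + p.2 + 2).toPNat (by omega)) f))
    - (∑ᶠ i : ℕ+, (((i : ℕ) : ℝ) * (((i : ℕ) : ℝ) + 1)) • (qv (i : ℕ) * pderiv i f))

noncomputable def Alin (c s : ℝ) : MvPolynomial ℕ+ ℝ →ₗ[ℝ] MvPolynomial ℕ+ ℝ where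
  toFun := Afun c s
  map_add' f g := by
    have e1 :
        (∑ᶠ p : ℕ+ × ℕ+,
          ((((p.1 : ℕ) : ℝ) + 1) * (((p.2 : ℕ) : ℝ) + 1)) •
            ((qv ((p.1 : ℕ) + (p.2 : ℕ)) - qv (p.1 : ℕ) * qv (p.2 : ℕ)) *
              pderiv p.1 (pderiv p.2 (f + g))))
        = (∑ᶠ p : ℕ+ × ℕ+,
            ((((p.1 : ℕ) : ℝ) + 1) * (((p.2 : ℕ) : ℝ) + 1)) •
              ((qv ((p.1 : ℕ) + (p.2 : ℕ)) - qv (p.1 : ℕ) * qv (p.2 : ℕ)) *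
                pderiv p.1 (pderiv p.2 f)))
          + ∑ᶠ p : ℕ+ × ℕ+,
              ((((p.1 : ℕ) : ℝ) + 1) * (((p.2 : ℕ) : ℝ) + 1)) •
                ((qv ((p.1 : ℕ) + (p.2 : ℕ)) - qv (p.1 : ℕ) * qv (p.2 : ℕ)) *
                  pderiv p.1 (pderiv p.2 g)) := by
      rw [← finsum_add_distrib (supp_double f _ _) (supp_double g _ _)]
      exact finsum_congr fun p => by
        rw [map_add, map_add, mul_add (qv ((p.1 : ℕ) + (p.2 : ℕ)) - qv (p.1 : ℕ) * qv (p.2 : ℕ)), smul_add]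
    have e2 : ∀ co : ℕ+ → ℝ, ∀ Q : ℕ+ → MvPolynomial ℕ+ ℝ,
        (∑ᶠ i : ℕ+, co i • (Q i * pderiv i (f + g)))
        = (∑ᶠ i : ℕ+, co i • (Q i * pderiv i f))
          + ∑ᶠ i : ℕ+, co i • (Q i * pderiv i g) := by
      intro co Q
      rw [← finsum_add_distrib (supp_single f _ _) (supp_single g _ _)]
      exact finsum_congr fun i => by rw [map_add, mul_add (Q i), smul_add]
    have e4 :
        (∑ᶠ p : ℕ × ℕ,
          ((p.1 : ℝ) + (p.2 : ℝ) + 3) •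
            (qv p.1 * qv p.2 * pderiv ((p.1 + p.2 + 2).toPNat (by omega)) (f + g)))
        = (∑ᶠ p : ℕ × ℕ,
            ((p.1 : ℝ) + (p.2 : ℝ) + 3) •
              (qv p.1 * qv p.2 * pderiv ((p.1 + p.2 + 2).toPNat (by omega)) f))
          + ∑ᶠ p : ℕ × ℕ,
              ((p.1 : ℝ) + (p.2 : ℝ) + 3) •
                (qv p.1 * qv p.2 * pderiv ((p.1 + p.2 + 2).toPNat (by omega)) g) := by
      rw [← finsum_add_distrib (supp_pair f _ _) (supp_pair g _ _)]
      exact finsum_congr fun p => by rw [map_add, mul_add (qv p.1 * qv p.2), smul_add]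
    simp only [Afun, e1, e2, e4, smul_add]
    abel
  map_smul' r f := by
    have e1 :
        (∑ᶠ p : ℕ+ × ℕ+,
          ((((p.1 : ℕ) : ℝ) + 1) * (((p.2 : ℕ) : ℝ) + 1)) •
            ((qv ((p.1 : ℕ) + (p.2 : ℕ)) - qv (p.1 : ℕ) * qv (p.2 : ℕ)) *
              pderiv p.1 (pderiv p.2 (r • f))))
        = r • ∑ᶠ p : ℕ+ × ℕ+,
            ((((p.1 : ℕ) : ℝ) + 1) * (((p.2 : ℕ) : ℝ) + 1)) •
              ((qv ((p.1 : ℕ) + (p.2 : ℕ)) - qv (p.1 : ℕ) * qv (p.2 : ℕ)) *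
                pderiv p.1 (pderiv p.2 f)) := by
      rw [smul_finsum' r (supp_double f _ _)]
      exact finsum_congr fun p => by
        rw [Derivation.map_smul, Derivation.map_smul, mul_smul_comm, smul_comm]
    have e2 : ∀ co : ℕ+ → ℝ, ∀ Q : ℕ+ → MvPolynomial ℕ+ ℝ,
        (∑ᶠ i : ℕ+, co i • (Q i * pderiv i (r • f)))
        = r • ∑ᶠ i : ℕ+, co i • (Q i * pderiv i f) := by
      intro co Q
      rw [smul_finsum' r (supp_single f _ _)]
      exact finsum_congr fun i => by rw [Derivation.map_smul, mul_smul_comm, smul_comm]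
    have e4 :
        (∑ᶠ p : ℕ × ℕ,
          ((p.1 : ℝ) + (p.2 : ℝ) + 3) •
            (qv p.1 * qv p.2 * pderiv ((p.1 + p.2 + 2).toPNat (by omega)) (r • f)))
        = r • ∑ᶠ p : ℕ × ℕ,
            ((p.1 : ℝ) + (p.2 : ℝ) + 3) •
              (qv p.1 * qv p.2 * pderiv ((p.1 + p.2 + 2).toPNat (by omega)) f) := by
      rw [smul_finsum' r (supp_pair f _ _)]
      exact finsum_congr fun p => by rw [Derivation.map_smul, mul_smul_comm, smul_comm]
    simp only [Afun, e1, e2, e4, RingHom.id_apply]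
    rw [smul_sub, smul_add, smul_add, smul_sub, smul_comm c r, smul_comm s r]

/-!
Grade `ℝ[q₁, q₂, …]` by the weight `wt q_i = i + 1`, so that monomials of weight `m` correspond
to partitions of `m` into parts `≥ 2`. On a monomial `q^k` of weight `n` the operator `A` is the
scalar `-n(n-1+c)` plus terms of weight `< n`: the Euler-type parts `∑ a_i q_i ∂_i` and
`∑ (i+1)(j+1) q_i q_j ∂_i ∂_j` multiply `q^k` by `∑ a_i k_i` and `n² - ∑ (i+1)² k_i`, while
`q_{i+j} ∂_i ∂_j`, `q_{i-1} ∂_i` and `q_i q_j ∂_{i+j+2}` lower the weight. For `c > 0` the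
diagonal values are pairwise distinct, so `A` is triangular with distinct diagonal entries for the
exhaustive filtration by weight, whose pieces are finite-dimensional. Such an operator is
diagonalizable, and its eigenspace for the `m`-th diagonal value is a complement of `{wt < m}` in
`{wt ≤ m}`.
-/

namespace Module.End

variable {K V : Type*} [Field K] [AddCommGroup V] [Module K V]

structure IsTriangular (T : Module.End K V) (F : ℕ → Submodule K V) (μ : ℕ → K) : Prop where
  monotone : Monotone F
  bot : F 0 = ⊥
  exhaustive : ∀ x, ∃ n, x ∈ F n
  sub_smul_mem : ∀ n, ∀ x ∈ F (n + 1), T x - μ n • x ∈ F n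

lemma eigenspace_le_map_sub_smul (T : Module.End K V) {a b : K} (hab : b ≠ a) :
    T.eigenspace b ≤ (T.eigenspace b).map (T - a • 1) := by
  intro x hx
  refine ⟨(b - a)⁻¹ • x, Submodule.smul_mem _ _ hx, ?_⟩
  simp only [LinearMap.sub_apply, LinearMap.smul_apply, one_apply, map_smul,
    mem_eigenspace_iff.mp hx]
  rw [← sub_smul, smul_smul, inv_mul_cancel₀ (sub_ne_zero.mpr hab), one_smul]

namespace IsTriangular

variable {T : Module.End K V} {F : ℕ → Submodule K V} {μ : ℕ → K} {r : K} {v : V}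

lemma mem_of_mem_succ (h : T.IsTriangular F μ) (hv : v ∈ T.eigenspace r) {n : ℕ}
    (hvn : v ∈ F (n + 1)) (hr : r ≠ μ n) : v ∈ F n := by
  have hsub : (r - μ n) • v ∈ F n := by
    rw [sub_smul, ← mem_eigenspace_iff.mp hv]
    exact h.sub_smul_mem n v hvn
  simpa [smul_smul, inv_mul_cancel₀ (sub_ne_zero.mpr hr)] using
    Submodule.smul_mem _ (r - μ n)⁻¹ hsub

lemma eq_zero_of_mem (h : T.IsTriangular F μ) (hv : v ∈ T.eigenspace r) {n : ℕ}
    (hvn : v ∈ F n) (hr : ∀ j < n, r ≠ μ j) : v = 0 := by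
  induction n with
  | zero => simpa [h.bot] using hvn
  | succ n ih =>
    exact ih (h.mem_of_mem_succ hv hvn (hr n n.lt_succ_self)) fun j hj => hr j (by omega)

lemma exists_eq_of_hasEigenvalue (h : T.IsTriangular F μ) (hr : T.HasEigenvalue r) :
    ∃ m, r = μ m := by
  obtain ⟨v, hv, hv0⟩ := hr.exists_hasEigenvector
  obtain ⟨n, hvn⟩ := h.exhaustive v
  by_contra! hne
  exact hv0 (h.eq_zero_of_mem hv hvn fun j _ => hne j)

lemma disjoint_eigenspace (h : T.IsTriangular F μ) (hμ : Function.Injective μ) (m : ℕ) :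
    Disjoint (F m) (T.eigenspace (μ m)) :=
  Submodule.disjoint_def.mpr fun _ hvm hv =>
    h.eq_zero_of_mem hv hvm fun _ hj heq => hj.ne (hμ heq).symm

lemma eigenspace_le (h : T.IsTriangular F μ) (hμ : Function.Injective μ) (m : ℕ) :
    T.eigenspace (μ m) ≤ F (m + 1) := by
  intro v hv
  have descend : ∀ j, v ∈ F (m + 1 + j) → v ∈ F (m + 1) := by
    intro j
    induction j with
    | zero => exact id
    | succ j ih =>
      exact fun hj => ih (h.mem_of_mem_succ hv hj fun heq => by have := hμ heq; omega)
  obtain ⟨n, hvn⟩ := h.exhaustive v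
  rcases le_total n (m + 1) with hle | hle
  · exact h.monotone hle hvn
  · obtain ⟨j, rfl⟩ := Nat.exists_eq_add_of_le hle
    exact descend j hvn

lemma le_iSup_eigenspace (h : T.IsTriangular F μ) (hμ : Function.Injective μ) (n : ℕ) :
    F n ≤ ⨆ m < n, T.eigenspace (μ m) := by
  induction n with
  | zero => simp [h.bot]
  | succ n ih =>
    set U := ⨆ m < n, T.eigenspace (μ m)
    have hsurj : U ≤ U.map (T - μ n • 1) :=
      iSup₂_le fun m hm => (T.eigenspace_le_map_sub_smul fun heq => hm.ne (hμ heq)).trans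
        (Submodule.map_mono (le_iSup₂_of_le m hm le_rfl))
    intro x hx
    obtain ⟨z, hzU, hz⟩ := hsurj (ih (h.sub_smul_mem n x hx))
    have hxz : x - z ∈ T.eigenspace (μ n) := by
      rw [mem_eigenspace_iff, map_sub, smul_sub, sub_eq_sub_iff_sub_eq_sub]
      simpa using hz.symm
    rw [Nat.iSup_lt_succ]
    simpa using Submodule.add_mem_sup hzU hxz

lemma iSup_eigenspace_eq_top (h : T.IsTriangular F μ) (hμ : Function.Injective μ) :
    ⨆ r, T.eigenspace r = ⊤ := by
  refine eq_top_iff.mpr fun x _ => ?_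
  obtain ⟨n, hxn⟩ := h.exhaustive x
  exact (iSup₂_le fun m _ => le_iSup (T.eigenspace ·) (μ m) :
    ⨆ m < n, T.eigenspace (μ m) ≤ _) (h.le_iSup_eigenspace hμ n hxn)

lemma succ_eq_sup (h : T.IsTriangular F μ) (hμ : Function.Injective μ) (m : ℕ) :
    F (m + 1) = F m ⊔ T.eigenspace (μ m) := by
  refine le_antisymm ?_ (sup_le (h.monotone m.le_succ) (h.eigenspace_le hμ m))
  refine (h.le_iSup_eigenspace hμ (m + 1)).trans ?_
  rw [Nat.iSup_lt_succ]
  exact sup_le_sup_right (iSup₂_le fun j hj => (h.eigenspace_le hμ j).trans (h.monotone hj)) _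

lemma eigenspace_zero_eq (h : T.IsTriangular F μ) (hμ : Function.Injective μ) :
    T.eigenspace (μ 0) = F 1 := by
  rw [h.succ_eq_sup hμ, h.bot, bot_sup_eq]

lemma finrank_succ (h : T.IsTriangular F μ) (hμ : Function.Injective μ) (m : ℕ)
    [FiniteDimensional K (F (m + 1))] :
    Module.finrank K (F (m + 1)) =
      Module.finrank K (F m) + Module.finrank K (T.eigenspace (μ m)) := by
  have := Submodule.finiteDimensional_of_le (h.monotone m.le_succ)
  have := Submodule.finiteDimensional_of_le (h.eigenspace_le hμ m)
  have hsum := Submodule.finrank_sup_add_finrank_inf_eq (F m) (T.eigenspace (μ m))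
  rwa [(h.disjoint_eigenspace hμ m).eq_bot, finrank_bot, add_zero, ← h.succ_eq_sup hμ] at hsum

end IsTriangular

end Module.End

namespace MvPolynomial

variable {σ R : Type*}

section WeightFiltration

variable (R) [CommSemiring R] (w : σ → ℕ)

noncomputable def weightLE (n : ℤ) : Submodule R (MvPolynomial σ R) :=
  restrictSupport R {u | (Finsupp.weight w u : ℤ) ≤ n}

variable {R w}

lemma mem_weightLE {n : ℤ} {f : MvPolynomial σ R} :
    f ∈ weightLE R w n ↔ ∀ u ∈ f.support, (Finsupp.weight w u : ℤ) ≤ n :=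
  Iff.rfl

lemma weightLE_mono : Monotone (weightLE R w) :=
  fun _ _ hmn _ hf u hu => (mem_weightLE.mp hf u hu).trans hmn

lemma monomial_mem_weightLE (u : σ →₀ ℕ) (a : R) :
    monomial u a ∈ weightLE R w (Finsupp.weight w u) :=
  (monomial_mem_restrictSupport R).mpr (Or.inl (le_refl (_ : ℤ)))

lemma mul_mem_weightLE {a b : ℤ} {f g : MvPolynomial σ R} (hf : f ∈ weightLE R w a)
    (hg : g ∈ weightLE R w b) : f * g ∈ weightLE R w (a + b) := by
  classical
  refine mem_weightLE.mpr fun u hu => ?_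
  obtain ⟨x, hx, y, hy, rfl⟩ := Finset.mem_add.mp (support_mul f g hu)
  have := mem_weightLE.mp hf x hx
  have := mem_weightLE.mp hg y hy
  rw [map_add, Nat.cast_add]
  omega

lemma pderiv_mem_weightLE {n : ℤ} {f : MvPolynomial σ R} (hf : f ∈ weightLE R w n) (i : σ) :
    pderiv i f ∈ weightLE R w (n - w i) := by
  classical
  refine mem_weightLE.mpr fun u hu => ?_
  have hcoeff : coeff (u + Finsupp.single i 1) f ≠ 0 := fun h =>
    mem_support_iff.mp hu (by rw [coeff_pderiv, h, zero_mul])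
  have := mem_weightLE.mp hf _ (mem_support_iff.mpr hcoeff)
  simp only [map_add, Finsupp.weight_single, smul_eq_mul, one_mul, Nat.cast_add] at this
  omega

lemma X_mem_weightLE (i : σ) : (X i : MvPolynomial σ R) ∈ weightLE R w (w i) := by
  simpa [X, Finsupp.weight_single] using monomial_mem_weightLE (w := w) (Finsupp.single i 1) (1 : R)

lemma one_mem_weightLE {n : ℤ} (hn : 0 ≤ n) : (1 : MvPolynomial σ R) ∈ weightLE R w n :=
  weightLE_mono hn (by simpa using monomial_mem_weightLE (w := w) (0 : σ →₀ ℕ) (1 : R))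

lemma weightLE_eq_bot {n : ℤ} (hn : n < 0) : weightLE R w n = ⊥ := by
  refine eq_bot_iff.mpr fun f hf => ?_
  rw [Submodule.mem_bot, ← support_eq_empty, Finset.eq_empty_iff_forall_notMem]
  intro u hu
  have := mem_weightLE.mp hf u hu
  omega

lemma exists_mem_weightLE (f : MvPolynomial σ R) : ∃ n : ℕ, f ∈ weightLE R w n :=
  ⟨f.support.sup (Finsupp.weight w),
    mem_weightLE.mpr fun _ hu => Nat.cast_le.mpr (Finset.le_sup hu)⟩

lemma weightLE_zero (hw : ∀ i, w i ≠ 0) : weightLE R w 0 = Submodule.span R {1} := by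
  have hzero : {u : σ →₀ ℕ | (Finsupp.weight w u : ℤ) ≤ 0} = {0} := by
    have := Finsupp.nonTorsionWeight_of ℕ w hw
    ext u
    simpa using Finsupp.weight_eq_zero_iff_eq_zero w
  rw [weightLE, restrictSupport_eq_span, hzero, Set.image_singleton, monomial_zero', C_1]

lemma finrank_weightLE [StrongRankCondition R] (n : ℤ) :
    Module.finrank R (weightLE R w n) = {u : σ →₀ ℕ | (Finsupp.weight w u : ℤ) ≤ n}.ncard :=
  (Module.finrank_eq_nat_card_basis (basisRestrictSupport R _)).trans (Nat.card_coe_set_eq _)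

end WeightFiltration

section EulerOperators

lemma X_mul_X_mul_pderiv_pderiv_monomial [CommRing R] [DecidableEq σ] (i j : σ)
    (k : σ →₀ ℕ) (a : R) :
    X i * X j * pderiv i (pderiv j (monomial k a)) =
      ((k i : R) * k j - if i = j then (k j : R) else 0) • monomial k a := by
  have euler : pderiv i (X j * pderiv j (monomial k a)) = k j • pderiv i (monomial k a) := by
    rw [X_mul_pderiv_monomial, map_nsmul]
  rw [Derivation.leibniz, smul_eq_mul, smul_eq_mul, pderiv_X] at euler
  have key : X i * X j * pderiv i (pderiv j (monomial k a)) =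
      k j • (X i * pderiv i (monomial k a)) -
        Pi.single (M := fun _ => MvPolynomial σ R) i 1 j * (X i * pderiv j (monomial k a)) := by
    rw [← mul_smul_comm, ← euler]
    ring
  rw [key, X_mul_pderiv_monomial, sub_smul, smul_smul, ← Nat.cast_smul_eq_nsmul R]
  congr 1
  · rw [mul_comm, Nat.cast_mul]
  · by_cases hij : i = j
    · subst hij
      rw [if_pos rfl, Pi.single_eq_same, one_mul, X_mul_pderiv_monomial, Nat.cast_smul_eq_nsmul]
    · rw [if_neg hij, Pi.single_eq_of_ne' hij, zero_mul, zero_smul]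

lemma finsum_smul_X_mul_pderiv_monomial [CommSemiring R] (g : σ → R) (k : σ →₀ ℕ) (a : R) :
    ∑ᶠ i, g i • (X i * pderiv i (monomial k a)) =
      (∑ i ∈ k.support, g i * k i) • monomial k a := by
  simp_rw [X_mul_pderiv_monomial, ← Nat.cast_smul_eq_nsmul R, smul_smul]
  rw [finsum_eq_sum_of_support_subset _ fun i hi => ?_, Finset.sum_smul]
  by_contra hk
  simp [Finsupp.notMem_support_iff.mp hk] at hi

lemma finsum_smul_X_mul_X_mul_pderiv_pderiv_monomial [CommRing R] [DecidableEq σ]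
    (g : σ → R) (k : σ →₀ ℕ) (a : R) :
    ∑ᶠ p : σ × σ, (g p.1 * g p.2) • (X p.1 * X p.2 * pderiv p.1 (pderiv p.2 (monomial k a))) =
      ((∑ i ∈ k.support, g i * k i) ^ 2 - ∑ i ∈ k.support, g i ^ 2 * k i) • monomial k a := by
  simp_rw [X_mul_X_mul_pderiv_pderiv_monomial, smul_smul]
  rw [finsum_eq_sum_of_support_subset _ (s := k.support ×ˢ k.support) fun p hp => ?_,
    ← Finset.sum_smul]
  · congr 1
    simp_rw [mul_sub, Finset.sum_sub_distrib, Finset.sum_product, sq, Finset.sum_mul_sum,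
      mul_ite, mul_zero]
    rw [Finset.sum_congr rfl fun i hi => (Finset.sum_ite_eq k.support i _).trans (if_pos hi)]
    congr 1
    exact Finset.sum_congr rfl fun i _ => Finset.sum_congr rfl fun j _ => by ring
  · by_contra hk
    rw [Finset.coe_product, Set.mem_prod, not_and_or] at hk
    apply hp
    rcases hk with hk | hk <;> have hk0 := Finsupp.notMem_support_iff.mp hk
    · by_cases h : p.1 = p.2
      · rw [if_pos h, ← h, hk0]
        simp
      · simp [h, hk0]
    · simp [hk0]

end EulerOperators

end MvPolynomial

def qweight (i : ℕ+) : ℕ := i + 1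

noncomputable def eigval (c : ℝ) (m : ℕ) : ℝ := -((m : ℝ) * ((m : ℝ) - 1 + c))

lemma eigval_zero (c : ℝ) : eigval c 0 = 0 := by simp [eigval]

lemma eigval_strictAnti {c : ℝ} (hc : 0 < c) : StrictAnti (eigval c) := by
  intro m m' hmm'
  have hlt : (m : ℝ) < m' := Nat.cast_lt.mpr hmm'
  have hm' : (1 : ℝ) ≤ m' := Nat.one_le_cast.mpr (Nat.one_le_of_lt hmm')
  simp only [eigval, neg_lt_neg_iff]
  nlinarith [mul_pos (sub_pos.mpr hlt) (by linarith : (0 : ℝ) < m' + m - 1 + c)]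

lemma qv_coe (i : ℕ+) : qv i = X i := dif_pos i.pos

lemma qv_mem_weightLE (n : ℕ) : qv n ∈ weightLE ℝ qweight (n + 1) := by
  unfold qv
  split_ifs with hn
  · simpa [qweight] using X_mem_weightLE (R := ℝ) (w := qweight) ⟨n, hn⟩
  · exact one_mem_weightLE (by positivity)

section LowerOrderTerms

variable {n : ℤ} {f : MvPolynomial ℕ+ ℝ}

lemma finsum_qv_add_mul_pderiv_pderiv_mem_weightLE (hf : f ∈ weightLE ℝ qweight n)
    (co : ℕ+ × ℕ+ → ℝ) :
    ∑ᶠ p : ℕ+ × ℕ+, co p • (qv ((p.1 : ℕ) + (p.2 : ℕ)) * pderiv p.1 (pderiv p.2 f)) ∈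
      weightLE ℝ qweight (n - 1) :=
  finsum_induction _ (zero_mem _) (fun _ _ => add_mem) fun p => Submodule.smul_mem _ _ <|
    weightLE_mono (by simp only [qweight]; push_cast; omega) <|
      mul_mem_weightLE (qv_mem_weightLE _) (pderiv_mem_weightLE (pderiv_mem_weightLE hf _) _)

lemma finsum_qv_pred_mul_pderiv_mem_weightLE (hf : f ∈ weightLE ℝ qweight n) (co : ℕ+ → ℝ) :
    ∑ᶠ i : ℕ+, co i • (qv ((i : ℕ) - 1) * pderiv i f) ∈ weightLE ℝ qweight (n - 1) :=
  finsum_induction _ (zero_mem _) (fun _ _ => add_mem) fun i => Submodule.smul_mem _ _ <|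
    weightLE_mono (by have := i.pos; simp only [qweight]; omega) <|
      mul_mem_weightLE (qv_mem_weightLE _) (pderiv_mem_weightLE hf _)

lemma finsum_qv_mul_qv_mul_pderiv_mem_weightLE (hf : f ∈ weightLE ℝ qweight n)
    (co : ℕ × ℕ → ℝ) :
    ∑ᶠ p : ℕ × ℕ, co p • (qv p.1 * qv p.2 * pderiv ((p.1 + p.2 + 2).toPNat (by omega)) f) ∈
      weightLE ℝ qweight (n - 1) :=
  finsum_induction _ (zero_mem _) (fun _ _ => add_mem) fun p => Submodule.smul_mem _ _ <|
    weightLE_mono (by simp only [qweight, Nat.toPNat, PNat.mk_coe]; push_cast; omega) <|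
      mul_mem_weightLE (mul_mem_weightLE (qv_mem_weightLE _) (qv_mem_weightLE _))
        (pderiv_mem_weightLE hf _)

end LowerOrderTerms

section DiagonalTerms

variable (k : ℕ+ →₀ ℕ)

lemma finsum_smul_qv_mul_pderiv_monomial (g : ℕ+ → ℝ) :
    ∑ᶠ i : ℕ+, g i • (qv (i : ℕ) * pderiv i (monomial k 1)) =
      (∑ i ∈ k.support, g i * k i) • monomial k (1 : ℝ) := by
  simp_rw [qv_coe]
  exact finsum_smul_X_mul_pderiv_monomial g k 1

lemma finsum_smul_qv_mul_qv_mul_pderiv_pderiv_monomial (g : ℕ+ → ℝ) :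
    ∑ᶠ p : ℕ+ × ℕ+, (g p.1 * g p.2) •
        (qv (p.1 : ℕ) * qv (p.2 : ℕ) * pderiv p.1 (pderiv p.2 (monomial k 1))) =
      ((∑ i ∈ k.support, g i * k i) ^ 2 - ∑ i ∈ k.support, g i ^ 2 * k i) •
        monomial k (1 : ℝ) := by
  simp_rw [qv_coe]
  exact finsum_smul_X_mul_X_mul_pderiv_pderiv_monomial g k 1

lemma cast_weight_qweight :
    (Finsupp.weight qweight k : ℝ) = ∑ i ∈ k.support, ((i : ℝ) + 1) * k i := by
  rw [Finsupp.weight_apply, Finsupp.sum, Nat.cast_sum]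
  exact Finset.sum_congr rfl fun i _ => by simp [qweight, mul_comm]

end DiagonalTerms

lemma finsum_smul_sub_mul_pderiv_pderiv (f : MvPolynomial ℕ+ ℝ) (co : ℕ+ × ℕ+ → ℝ)
    (Q₁ Q₂ : ℕ+ × ℕ+ → MvPolynomial ℕ+ ℝ) :
    ∑ᶠ p : ℕ+ × ℕ+, co p • ((Q₁ p - Q₂ p) * pderiv p.1 (pderiv p.2 f)) =
      ∑ᶠ p : ℕ+ × ℕ+, co p • (Q₁ p * pderiv p.1 (pderiv p.2 f)) -
        ∑ᶠ p : ℕ+ × ℕ+, co p • (Q₂ p * pderiv p.1 (pderiv p.2 f)) := by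
  rw [← finsum_sub_distrib (supp_double f co Q₁) (supp_double f co Q₂)]
  simp_rw [sub_mul, smul_sub]

lemma Alin_monomial_sub_smul_mem (c s : ℝ) (k : ℕ+ →₀ ℕ) :
    Alin c s (monomial k 1) - eigval c (Finsupp.weight qweight k) • monomial k 1 ∈
      weightLE ℝ qweight (Finsupp.weight qweight k - 1) := by
  have hk : monomial k (1 : ℝ) ∈ weightLE ℝ qweight (Finsupp.weight qweight k) :=
    monomial_mem_weightLE k 1
  have hT1 := finsum_smul_sub_mul_pderiv_pderiv (monomial k 1)
    (fun p => (((p.1 : ℕ) : ℝ) + 1) * (((p.2 : ℕ) : ℝ) + 1))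
    (fun p => qv ((p.1 : ℕ) + (p.2 : ℕ))) fun p => qv (p.1 : ℕ) * qv (p.2 : ℕ)
  rw [finsum_smul_qv_mul_qv_mul_pderiv_pderiv_monomial k fun i => (i : ℝ) + 1] at hT1
  have hT2 := finsum_smul_qv_mul_pderiv_monomial k fun i => (i : ℝ) + 1
  have hT5 := finsum_smul_qv_mul_pderiv_monomial k fun i => (i : ℝ) * ((i : ℝ) + 1)
  have hsum : ∑ i ∈ k.support, (i : ℝ) * ((i : ℝ) + 1) * k i =
      ∑ i ∈ k.support, ((i : ℝ) + 1) ^ 2 * k i - ∑ i ∈ k.support, ((i : ℝ) + 1) * k i := by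
    rw [← Finset.sum_sub_distrib]
    exact Finset.sum_congr rfl fun i _ => by ring
  change Afun c s (monomial k 1) - _ ∈ _
  rw [Afun, hT1, hT2, hT5, hsum, eigval, cast_weight_qweight]
  -- with `d = ∑ (i+1) kᵢ = wt k` and `e = ∑ (i+1)² kᵢ`, the diagonal coefficient is
  -- `-(d² - e) - c d - (e - d) = -d (d - 1 + c)`
  convert add_mem (add_mem
    (finsum_qv_add_mul_pderiv_pderiv_mem_weightLE hk
      fun p => (((p.1 : ℕ) : ℝ) + 1) * (((p.2 : ℕ) : ℝ) + 1))
    (Submodule.smul_mem _ s (finsum_qv_pred_mul_pderiv_mem_weightLE hk fun i => ((i : ℕ) : ℝ) + 1)))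
    (finsum_qv_mul_qv_mul_pderiv_mem_weightLE hk fun p => (p.1 : ℝ) + (p.2 : ℝ) + 3) using 1
  module

noncomputable def weightBelow (n : ℕ) : Submodule ℝ (MvPolynomial ℕ+ ℝ) :=
  weightLE ℝ qweight ((n : ℤ) - 1)

lemma Alin_sub_smul_mem_weightBelow (c s : ℝ) (n : ℕ) :
    ∀ f ∈ weightBelow (n + 1), Alin c s f - eigval c n • f ∈ weightBelow n := by
  have hle : weightLE ℝ qweight n ≤ (weightBelow n).comap (Alin c s - eigval c n • 1) := by
    rw [weightLE, restrictSupport_eq_span, Submodule.span_le]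
    rintro _ ⟨u, hu, rfl⟩
    replace hu : (Finsupp.weight qweight u : ℤ) ≤ n := hu
    have hsplit : Alin c s (monomial u 1) - eigval c n • monomial u 1 =
        (Alin c s (monomial u 1) - eigval c (Finsupp.weight qweight u) • monomial u 1) +
          (eigval c (Finsupp.weight qweight u) - eigval c n) • monomial u 1 := by
      module
    simp only [SetLike.mem_coe, Submodule.mem_comap, LinearMap.sub_apply, LinearMap.smul_apply,
      Module.End.one_apply, hsplit]
    refine add_mem (weightLE_mono (by omega) (Alin_monomial_sub_smul_mem c s u)) ?_
    rcases hu.eq_or_lt with heq | hlt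
    · rw [Nat.cast_inj.mp heq, sub_self, zero_smul]
      exact zero_mem _
    · exact Submodule.smul_mem _ _ (weightLE_mono (by omega) (monomial_mem_weightLE u 1))
  intro f hf
  exact hle (by simpa [weightBelow] using hf)

lemma isTriangular_Alin (c s : ℝ) : Module.End.IsTriangular (Alin c s) weightBelow (eigval c) where
  monotone _ _ hmn := weightLE_mono (by omega)
  bot := weightLE_eq_bot (by norm_num)
  exhaustive f := by
    obtain ⟨n, hn⟩ := exists_mem_weightLE (w := qweight) f
    exact ⟨n + 1, by simpa [weightBelow] using hn⟩
  sub_smul_mem := Alin_sub_smul_mem_weightBelow c s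

lemma weight_qweight_eq_sum_map (u : ℕ+ →₀ ℕ) :
    Finsupp.weight qweight u = ((Finsupp.toMultiset u).map qweight).sum := by
  rw [Finsupp.toMultiset_map, Finsupp.sum_toMultiset,
    Finsupp.sum_mapDomain_index (h := fun a n => n • a) (fun _ => zero_smul ..)
      fun _ _ _ => add_smul .., Finsupp.weight_apply]

lemma toPNat'_qweight_sub_one (i : ℕ+) : (qweight i - 1).toPNat' = i :=
  PNat.coe_injective (PNat.toPNat'_coe (by simp [qweight]))

lemma qweight_toPNat' {j : ℕ} (hj : 2 ≤ j) : qweight (j - 1).toPNat' = j := by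
  rw [qweight, PNat.toPNat'_coe (by omega)]
  omega

lemma map_qweight_map_toPNat' {s : Multiset ℕ} (hs : ∀ j ∈ s, 2 ≤ j) :
    (s.map fun j => (j - 1).toPNat').map qweight = s := by
  rw [Multiset.map_map]
  refine (Multiset.map_congr rfl fun j hj => ?_).trans (Multiset.map_id' s)
  exact qweight_toPNat' (hs j hj)

noncomputable def weightEquivPartition (m : ℕ) :
    {u : ℕ+ →₀ ℕ // Finsupp.weight qweight u = m} ≃
      {p : m.Partition // ∀ j ∈ p.parts, 2 ≤ j} where
  toFun u :=
    ⟨⟨(Finsupp.toMultiset u.1).map qweight,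
      fun hj => by obtain ⟨i, -, rfl⟩ := Multiset.mem_map.mp hj; exact Nat.succ_pos _,
      by rw [← weight_qweight_eq_sum_map, u.2]⟩,
    fun j hj => by obtain ⟨i, -, rfl⟩ := Multiset.mem_map.mp hj; exact Nat.succ_le_succ i.pos⟩
  invFun p :=
    ⟨Multiset.toFinsupp (p.1.parts.map fun j => (j - 1).toPNat'), by
      rw [weight_qweight_eq_sum_map, Multiset.toFinsupp_toMultiset, map_qweight_map_toPNat' p.2,
        p.1.parts_sum]⟩
  left_inv u := Subtype.ext <| by
    simp only [Multiset.map_map, Function.comp_def, toPNat'_qweight_sub_one, Multiset.map_id',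
      Finsupp.toMultiset_toFinsupp]
  right_inv p := Subtype.ext <| Nat.Partition.ext <| by
    simp only [Multiset.toFinsupp_toMultiset, map_qweight_map_toPNat' p.2]

lemma finite_weight_eq (m : ℕ) : {u : ℕ+ →₀ ℕ | Finsupp.weight qweight u = m}.Finite :=
  Set.finite_coe_iff.mp (Finite.of_equiv _ (weightEquivPartition m).symm)

lemma finite_weight_le (n : ℤ) :
    {u : ℕ+ →₀ ℕ | (Finsupp.weight qweight u : ℤ) ≤ n}.Finite :=
  ((Set.finite_le_nat n.toNat).biUnion fun m _ => finite_weight_eq m).subset fun u hu =>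
    Set.mem_biUnion (x := Finsupp.weight qweight u)
      (by rw [Set.mem_ofPred_eq] at hu ⊢; omega) rfl

instance (n : ℕ) : FiniteDimensional ℝ (weightBelow n) :=
  have := (finite_weight_le ((n : ℤ) - 1)).to_subtype
  Module.Finite.of_basis (basisRestrictSupport ℝ _)

lemma ncard_weight_le_eq_add (m : ℕ) :
    {u : ℕ+ →₀ ℕ | (Finsupp.weight qweight u : ℤ) ≤ m}.ncard =
      {u : ℕ+ →₀ ℕ | (Finsupp.weight qweight u : ℤ) ≤ m - 1}.ncard +
        {u : ℕ+ →₀ ℕ | Finsupp.weight qweight u = m}.ncard := by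
  rw [← Set.ncard_union_eq _ (finite_weight_le _) (finite_weight_eq m)]
  · congr 1
    ext u
    rw [Set.mem_union, Set.mem_ofPred_eq, Set.mem_ofPred_eq, Set.mem_ofPred_eq]
    omega
  · exact Set.disjoint_left.mpr fun u hu hu' => by
      rw [Set.mem_ofPred_eq] at hu hu'
      omega

lemma finrank_eigenspace_Alin {c : ℝ} (hc : 0 < c) (s : ℝ) (m : ℕ) :
    Module.finrank ℝ (Module.End.eigenspace (Alin c s) (eigval c m)) =
      Nat.card {u : ℕ+ →₀ ℕ // Finsupp.weight qweight u = m} := by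
  have h := (isTriangular_Alin c s).finrank_succ (eigval_strictAnti hc).injective m
  rw [weightBelow, weightBelow, finrank_weightLE, finrank_weightLE, Nat.cast_succ,
    add_sub_cancel_right, ncard_weight_le_eq_add] at h
  have hcard : Nat.card {u : ℕ+ →₀ ℕ // Finsupp.weight qweight u = m} =
      {u : ℕ+ →₀ ℕ | Finsupp.weight qweight u = m}.ncard := Nat.card_coe_set_eq _
  omega

lemma exists_weight_eq_iff (m : ℕ) :
    (∃ u : ℕ+ →₀ ℕ, Finsupp.weight qweight u = m) ↔ m ≠ 1 := by
  constructor
  · rintro ⟨u, rfl⟩ hu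
    obtain rfl | hu0 := eq_or_ne u 0
    · simp at hu
    · obtain ⟨i, hi⟩ := Finsupp.ne_iff.mp hu0
      have hle := Finsupp.le_weight_of_ne_zero' qweight hi
      have hi2 : 2 ≤ qweight i := Nat.succ_le_succ i.pos
      omega
  · intro hm
    rcases Nat.lt_or_ge m 2 with h | h
    · exact ⟨0, by rw [map_zero]; omega⟩
    · exact ⟨Finsupp.single (m - 1).toPNat' 1, by
        rw [Finsupp.weight_single, one_smul, qweight_toPNat' h]⟩

lemma hasEigenvalue_eigval_iff {c : ℝ} (hc : 0 < c) (s : ℝ) (m : ℕ) :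
    Module.End.HasEigenvalue (Alin c s) (eigval c m) ↔ m ≠ 1 := by
  have := Submodule.finiteDimensional_of_le
    ((isTriangular_Alin c s).eigenspace_le (eigval_strictAnti hc).injective m)
  rw [Module.End.hasEigenvalue_iff, ne_eq, ← Submodule.finrank_eq_zero,
    finrank_eigenspace_Alin hc, ← ne_eq, Nat.card_ne_zero, nonempty_subtype,
    exists_weight_eq_iff]
  exact ⟨fun h => h.1, fun h => ⟨h, (finite_weight_eq m).to_subtype⟩⟩

lemma hasEigenvalue_Alin_iff {c : ℝ} (hc : 0 < c) (s r : ℝ) :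
    Module.End.HasEigenvalue (Alin c s) r ↔
      r = 0 ∨ ∃ m : ℕ, 2 ≤ m ∧ r = -((m : ℝ) * ((m : ℝ) - 1 + c)) := by
  constructor
  · intro hr
    obtain ⟨m, rfl⟩ := (isTriangular_Alin c s).exists_eq_of_hasEigenvalue hr
    have hm := (hasEigenvalue_eigval_iff hc s m).mp hr
    rcases Nat.lt_or_ge m 2 with h | h
    · obtain rfl : m = 0 := by omega
      exact Or.inl (eigval_zero c)
    · exact Or.inr ⟨m, h, rfl⟩
  · rintro (rfl | ⟨m, hm, rfl⟩)
    · simpa [eigval_zero] using (hasEigenvalue_eigval_iff hc s 0).mpr zero_ne_one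
    · exact (hasEigenvalue_eigval_iff hc s m).mpr (by omega)

lemma eigenspace_Alin_zero {c : ℝ} (hc : 0 < c) (s : ℝ) :
    Module.End.eigenspace (Alin c s) 0 = Submodule.span ℝ {1} := by
  rw [← eigval_zero c,
    (isTriangular_Alin c s).eigenspace_zero_eq (eigval_strictAnti hc).injective,
    weightBelow, Nat.cast_one, sub_self]
  exact weightLE_zero fun i => Nat.succ_ne_zero i

open Module in
/-- For `c > 0`, the polynomial algebra `R = ℝ[q₁, q₂, …]` is the direct
sum of the eigenspaces of `A`; the eigenvalues of `A` are exactly `0` and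
`-m(m-1+c)` for integers `m ≥ 2`; the `0`-eigenspace is the (one-dimensional) space of
constants; and the eigenspace for `-m(m-1+c)` has dimension equal to the number of
partitions of `m` all of whose parts are `≥ 2`. -/
theorem Alin_spectral_structure (c s : ℝ) (hc : 0 < c) :
    (iSupIndep fun r : ℝ => Module.End.eigenspace (Alin c s) r) ∧
      ((⨆ r : ℝ, Module.End.eigenspace (Alin c s) r) = ⊤) ∧
      (∀ r : ℝ, Module.End.HasEigenvalue (Alin c s) r ↔
        r = 0 ∨ ∃ m : ℕ, 2 ≤ m ∧ r = -((m : ℝ) * ((m : ℝ) - 1 + c))) ∧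
      (Module.End.eigenspace (Alin c s) 0
        = Submodule.span ℝ {(1 : MvPolynomial ℕ+ ℝ)}) ∧
      (∀ m : ℕ, 2 ≤ m →
        Module.finrank ℝ
            (Module.End.eigenspace (Alin c s) (-((m : ℝ) * ((m : ℝ) - 1 + c))))
          = Nat.card {p : m.Partition // ∀ j ∈ p.parts, 2 ≤ j}) := by
  refine ⟨Module.End.eigenspaces_iSupIndep _,
    (isTriangular_Alin c s).iSup_eigenspace_eq_top (eigval_strictAnti hc).injective,
    hasEigenvalue_Alin_iff hc s, eigenspace_Alin_zero hc s, fun m _ => ?_⟩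
  rw [← Nat.card_congr (weightEquivPartition m)]
  exact finrank_eigenspace_Alin hc s m
end

section
/- For n ≥ 1 define the operator T_n on real functions g on {0,1,…,n} by (T_n g)(a) = [ (a+1)(n−a)·g(a+1) + a(n−a+1)·g(a−1) + ((a+1)² + (n−a+1)²)·g(a) ] / ((n+1)(n+2)) (the coefficients of g(n+1) and g(−1) vanish, so these values are irrelevant). For a real polynomial f, let f_n(a) := f(a/n). Then for every real polynomial f, max_{0 ≤ a ≤ n} | n²·((T_n f_n)(a) − f_n(a)) − [ x(1−x)·f''(x) + (1−2x)·f'(x) ]_{x = a/n} | tends to 0 as n → ∞. (This is the convergence of the generators of the up–down chains on the Pascal triangle to the diffusion generator x(1−x) d²/dx² + (1−2x) d/dx on [0,1].) -/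
/-!
Write `x = a/n`, `h = 1/n` and `A = (a+1)(n-a)`, `B = a(n-a+1)`. The three coefficients of `Tₙ`
add up to `(n+1)(n+2)`, so `n²(Tₙfₙ - fₙ)(a) = n²(A(f(x+h) - f(x)) + B(f(x-h) - f(x)))/((n+1)(n+2))`.
Expanding `f` to second order, with a remainder `O(h³)` uniformly for `x ∈ [0,1]` (the Taylor
expansion of a polynomial is a finite sum of Hasse derivatives), and using `A - B = n - 2a`,
`A + B = 2a(n-a) + n`, the first- and second-order terms give the generator up to an error
`O(1/n)`, uniformly in `a`.
-/

open Polynomial Filter Finset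

namespace Polynomial

theorem exists_abs_eval_add_sub_sum_hasseDeriv_le (f : ℝ[X]) (k : ℕ) {s : Set ℝ}
    (hs : IsCompact s) :
    ∃ K, ∀ x ∈ s, ∀ h : ℝ, |h| ≤ 1 →
      |f.eval (x + h) - ∑ i ∈ range k, (hasseDeriv i f).eval x * h ^ i| ≤ K * |h| ^ k := by
  set d := f.natDegree + 1
  obtain ⟨K, hK⟩ := hs.exists_bound_of_continuousOn
    (f := fun x ↦ ∑ j ∈ range d, |(hasseDeriv (k + j) f).eval x|) (by fun_prop)
  refine ⟨K, fun x hx h hh ↦ ?_⟩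
  have htaylor : f.eval (x + h) = ∑ i ∈ range (k + d), (hasseDeriv i f).eval x * h ^ i := by
    rw [add_comm, ← taylor_eval, eval_eq_sum_range' (n := k + d) (by rw [natDegree_taylor]; omega)]
    simp only [taylor_coeff]
  have hK' := (le_abs_self _).trans (hK x hx)
  rw [htaylor, sum_range_add, add_sub_cancel_left]
  calc |∑ j ∈ range d, (hasseDeriv (k + j) f).eval x * h ^ (k + j)|
      ≤ ∑ j ∈ range d, |(hasseDeriv (k + j) f).eval x| * |h| ^ k := by
        refine (abs_sum_le_sum_abs _ _).trans (sum_le_sum fun j _ ↦ ?_)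
        rw [abs_mul, abs_pow]
        exact mul_le_mul_of_nonneg_left (pow_le_pow_of_le_one (abs_nonneg h) hh (by omega))
          (abs_nonneg _)
    _ ≤ K * |h| ^ k := by
        rw [← sum_mul]
        exact mul_le_mul_of_nonneg_right hK' (by positivity)

theorem exists_abs_eval_add_sub_taylor_two_le (f : ℝ[X]) {s : Set ℝ} (hs : IsCompact s) :
    ∃ K, ∀ x ∈ s, ∀ h : ℝ, |h| ≤ 1 →
      |f.eval (x + h) - (f.eval x + (derivative f).eval x * h
        + (derivative (derivative f)).eval x / 2 * h ^ 2)| ≤ K * |h| ^ 3 := by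
  have hasseDeriv_two : (derivative (derivative f)) = 2 • hasseDeriv 2 f := by
    simpa using (congrFun (factorial_smul_hasseDeriv (R := ℝ) 2) f).symm
  simpa [sum_range_succ, hasseDeriv_two, hasseDeriv_one', add_assoc] using
    f.exists_abs_eval_add_sub_sum_hasseDeriv_le 3 hs

end Polynomial

theorem rescaled_updown_sub_generator_eq {n : ℝ} (hn : 0 < n) (a p q c d₁ d₂ : ℝ) :
    n ^ 2 * (((a + 1) * (n - a) * p + a * (n - a + 1) * q
          + ((a + 1) ^ 2 + (n - a + 1) ^ 2) * c) / ((n + 1) * (n + 2)) - c)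
      - (a / n * (1 - a / n) * d₂ + (1 - 2 * (a / n)) * d₁)
    = (n ^ 2 * ((a + 1) * (n - a) * (p - (c + d₁ * (1 / n) + d₂ / 2 * (1 / n) ^ 2))
          + a * (n - a + 1) * (q - (c + d₁ * -(1 / n) + d₂ / 2 * (-(1 / n)) ^ 2)))
        + n / 2 * d₂ - (3 * n + 2) * (a / n * (1 - a / n) * d₂ + (1 - 2 * (a / n)) * d₁))
      / ((n + 1) * (n + 2)) := by
  field_simp
  ring

theorem abs_updown_remainder_le {n a eUp eDown d G K L M : ℝ} (hn : 1 ≤ n) (ha : 0 ≤ a)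
    (han : a ≤ n) (hUp : |eUp| ≤ K * (1 / n) ^ 3) (hDown : |eDown| ≤ K * (1 / n) ^ 3)
    (hd : |d| ≤ L) (hG : |G| ≤ M) :
    |(n ^ 2 * ((a + 1) * (n - a) * eUp + a * (n - a + 1) * eDown) + n / 2 * d - (3 * n + 2) * G)
      / ((n + 1) * (n + 2))| ≤ (K + L + 3 * M) / n := by
  have hn0 : 0 < n := by linarith
  set A := (a + 1) * (n - a)
  set B := a * (n - a + 1)
  set N := (n + 1) * (n + 2)
  have hA : 0 ≤ A := mul_nonneg (by linarith) (by linarith)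
  have hB : 0 ≤ B := mul_nonneg ha (by linarith)
  have hN : 0 < N := by positivity
  have hAB : A + B ≤ N := by nlinarith
  have hK : 0 ≤ K := nonneg_of_mul_nonneg_left ((abs_nonneg _).trans hUp) (by positivity)
  have hL : 0 ≤ L := (abs_nonneg _).trans hd
  have hM : 0 ≤ M := (abs_nonneg _).trans hG
  rw [abs_div, abs_of_pos hN, div_le_iff₀ hN]
  calc |n ^ 2 * (A * eUp + B * eDown) + n / 2 * d - (3 * n + 2) * G|
      ≤ n ^ 2 * (A * |eUp| + B * |eDown|) + n / 2 * |d| + (3 * n + 2) * |G| := by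
        have hsum : |A * eUp + B * eDown| ≤ A * |eUp| + B * |eDown| := by
          refine (abs_add_le _ _).trans_eq ?_
          rw [abs_mul A, abs_mul B, abs_of_nonneg hA, abs_of_nonneg hB]
        refine (abs_sub _ _).trans (add_le_add ((abs_add_le _ _).trans (add_le_add ?_ ?_)) ?_)
        · rw [abs_mul, abs_of_nonneg (by positivity)]
          gcongr
        · rw [abs_mul, abs_of_nonneg (by positivity)]
        · rw [abs_mul, abs_of_nonneg (by positivity)]
    _ ≤ n ^ 2 * ((A + B) * (K * (1 / n) ^ 3)) + n / 2 * L + (3 * n + 2) * M := by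
        have hAB' : A * |eUp| + B * |eDown| ≤ (A + B) * (K * (1 / n) ^ 3) := by
          rw [add_mul]
          gcongr
        gcongr
    _ ≤ (K + L + 3 * M) / n * N := by
        field_simp
        nlinarith [mul_le_mul_of_nonneg_right hAB hK]

theorem abs_rescaled_updown_sub_generator_le {f : ℝ[X]} {K L M : ℝ}
    (htaylor : ∀ x ∈ Set.Icc (0 : ℝ) 1, ∀ h : ℝ, |h| ≤ 1 →
      |f.eval (x + h) - (f.eval x + (derivative f).eval x * h
        + (derivative (derivative f)).eval x / 2 * h ^ 2)| ≤ K * |h| ^ 3)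
    (hf'' : ∀ x ∈ Set.Icc (0 : ℝ) 1, |(derivative (derivative f)).eval x| ≤ L)
    (hgen : ∀ x ∈ Set.Icc (0 : ℝ) 1,
      |x * (1 - x) * (derivative (derivative f)).eval x + (1 - 2 * x) * (derivative f).eval x| ≤ M)
    {n a : ℝ} (hn : 1 ≤ n) (ha : 0 ≤ a) (han : a ≤ n) :
    |n ^ 2 * (((a + 1) * (n - a) * f.eval ((a + 1) / n) + a * (n - a + 1) * f.eval ((a - 1) / n)
          + ((a + 1) ^ 2 + (n - a + 1) ^ 2) * f.eval (a / n)) / ((n + 1) * (n + 2))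
        - f.eval (a / n))
      - (a / n * (1 - a / n) * (derivative (derivative f)).eval (a / n)
        + (1 - 2 * (a / n)) * (derivative f).eval (a / n))| ≤ (K + L + 3 * M) / n := by
  have hn0 : 0 < n := by linarith
  have hx : a / n ∈ Set.Icc (0 : ℝ) 1 := ⟨by positivity, div_le_one_of_le₀ han hn0.le⟩
  have hh : |1 / n| = 1 / n := abs_of_pos (by positivity)
  have hh1 : |1 / n| ≤ 1 := hh.trans_le (div_le_one_of_le₀ hn hn0.le)
  have hUp := htaylor _ hx _ hh1
  have hDown := htaylor _ hx _ ((abs_neg _).trans_le hh1)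
  rw [abs_neg, hh, show a / n + -(1 / n) = (a - 1) / n by ring] at hDown
  rw [hh, ← add_div] at hUp
  rw [rescaled_updown_sub_generator_eq hn0]
  exact abs_updown_remainder_le hn ha han hUp hDown (hf'' _ hx) (hgen _ hx)

/-- For the up–down Markov chains on the Pascal triangle (the point
`(a, n-a)` of the `n`-th row encoded by `a ∈ {0,…,n}` and embedded in `[0,1]` as
`x = a/n`), the rescaled generators `n² (Tₙ - 1)` applied to a polynomial `f`
converge uniformly to `x(1-x) f''(x) + (1-2x) f'(x)`. -/
theorem pascal_updown_generators_converge (f : Polynomial ℝ) :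
    Tendsto (fun n : ℕ =>
      (Finset.range (n + 1)).sup' ⟨0, Finset.mem_range.mpr n.succ_pos⟩ (fun a : ℕ =>
        |(n : ℝ) ^ 2 *
            ((((a : ℝ) + 1) * ((n : ℝ) - (a : ℝ)) * f.eval (((a : ℝ) + 1) / (n : ℝ))
                + (a : ℝ) * ((n : ℝ) - (a : ℝ) + 1) * f.eval (((a : ℝ) - 1) / (n : ℝ))
                + (((a : ℝ) + 1) ^ 2 + ((n : ℝ) - (a : ℝ) + 1) ^ 2)
                    * f.eval ((a : ℝ) / (n : ℝ)))
                  / (((n : ℝ) + 1) * ((n : ℝ) + 2))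
              - f.eval ((a : ℝ) / (n : ℝ)))
          - (((a : ℝ) / (n : ℝ)) * (1 - (a : ℝ) / (n : ℝ))
                * (derivative (derivative f)).eval ((a : ℝ) / (n : ℝ))
              + (1 - 2 * ((a : ℝ) / (n : ℝ))) * (derivative f).eval ((a : ℝ) / (n : ℝ)))|))
      atTop (nhds 0) := by
  have hI : IsCompact (Set.Icc (0 : ℝ) 1) := isCompact_Icc
  obtain ⟨K, hK⟩ := f.exists_abs_eval_add_sub_taylor_two_le hI
  obtain ⟨L, hL⟩ := hI.exists_bound_of_continuousOn
    (f := fun x ↦ (derivative (derivative f)).eval x) (by fun_prop)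
  obtain ⟨M, hM⟩ := hI.exists_bound_of_continuousOn
    (f := fun x ↦ x * (1 - x) * (derivative (derivative f)).eval x
      + (1 - 2 * x) * (derivative f).eval x) (by fun_prop)
  refine squeeze_zero' (Eventually.of_forall fun n ↦ ?_) ?_
    (tendsto_const_div_atTop_nhds_zero_nat (K + L + 3 * M))
  · exact le_sup'_of_le _ (mem_range.mpr n.succ_pos) (abs_nonneg _)
  · filter_upwards [eventually_ge_atTop 1] with n hn
    refine sup'_le _ _ fun a ha ↦ abs_rescaled_updown_sub_generator_le hK hL hM
      (by exact_mod_cast hn) a.cast_nonneg ?_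
    exact_mod_cast Nat.lt_succ_iff.mp (mem_range.mp ha)
end

section
/- For all complex numbers z, z', the operators E, F, H on the space V of finitely supported complex functions on the set of all Young diagrams, defined on the basis {δ_λ} by E δ_λ = ∑_{ν : ν ↘ λ} (z)_{ν/λ}(z')_{ν/λ} δ_ν, F δ_λ = −∑_{μ : μ ↗ λ} δ_μ, H δ_λ = (zz' + 2|λ|) δ_λ, satisfy the sl(2,ℂ) commutation relations: H∘E − E∘H = 2E, H∘F − F∘H = −2F, and E∘F − F∘E = H. -/
/-- The space of finitely supported complex functions on the set of all Young diagrams,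
with basis `{δ_λ}` (`δ_λ = Finsupp.single λ 1`). -/
abbrev YDSpace : Type := YoungDiagram →₀ ℂ

open YoungDiagram in
/-- The operator `E`: `E δ_λ = ∑_{ν ↘ λ} (z)_{ν/λ}(z')_{ν/λ} δ_ν`, extended linearly. -/
noncomputable def Eop (z z' : ℂ) : YDSpace →ₗ[ℂ] YDSpace :=
  Finsupp.lsum ℂ fun l => LinearMap.toSpanSingleton ℂ YDSpace
    (∑ᶠ (ν : YoungDiagram) (_ : Covers l ν),
      (poch z l ν * poch z' l ν) • Finsupp.single ν (1 : ℂ))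

open YoungDiagram in
/-- The operator `F`: `F δ_λ = -∑_{μ ↗ λ} δ_μ`, extended linearly. -/
noncomputable def Fop : YDSpace →ₗ[ℂ] YDSpace :=
  Finsupp.lsum ℂ fun l => LinearMap.toSpanSingleton ℂ YDSpace
    (-∑ᶠ (μ : YoungDiagram) (_ : Covers μ l), Finsupp.single μ (1 : ℂ))

/-- The operator `H`: `H δ_λ = (zz' + 2|λ|) δ_λ`, extended linearly. -/
noncomputable def Hop (z z' : ℂ) : YDSpace →ₗ[ℂ] YDSpace :=
  Finsupp.lsum ℂ fun l => LinearMap.toSpanSingleton ℂ YDSpace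
    ((z * z' + 2 * (l.card : ℂ)) • Finsupp.single l (1 : ℂ))

namespace YoungDiagram

instance : DecidableEq YoungDiagram := fun _ _ => decidable_of_iff _ YoungDiagram.ext_iff.symm

variable {μ ν a b : YoungDiagram} {c : ℕ × ℕ}

lemma eq_of_le_of_card_le (h : μ ≤ ν) (hcard : ν.card ≤ μ.card) : μ = ν :=
  YoungDiagram.ext (Finset.eq_of_subset_of_card_le (cells_subset_iff.mpr h) hcard)

lemma card_sup_add_card_inf (μ ν : YoungDiagram) :
    (μ ⊔ ν).card + (μ ⊓ ν).card = μ.card + ν.card := by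
  simp only [YoungDiagram.card, cells_sup, cells_inf, Finset.card_union_add_card_inter]

lemma poch_inf_left (w : ℂ) (μ ν : YoungDiagram) : poch w (μ ⊓ ν) ν = poch w μ (μ ⊔ ν) := by
  rw [poch, poch, cells_inf, cells_sup, Finset.sdiff_inter_self_right, Finset.union_sdiff_left]

namespace Covers

lemma inf_eq (ha : Covers μ a) (hb : Covers μ b) (hab : a ≠ b) : a ⊓ b = μ := by
  obtain ⟨hμa, ha⟩ := ha
  obtain ⟨hμb, hb⟩ := hb
  refine (eq_of_le_of_card_le (le_inf hμa hμb) ?_).symm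
  by_contra! hlt
  have hinf : a ⊓ b = a := eq_of_le_of_card_le inf_le_left (by omega)
  exact hab (eq_of_le_of_card_le (inf_eq_left.mp hinf) (by omega))

lemma covers_sup (ha : Covers μ a) (hb : Covers μ b) (hab : a ≠ b) : Covers a (a ⊔ b) := by
  refine ⟨le_sup_left, ?_⟩
  have := card_sup_add_card_inf a b
  rw [ha.inf_eq hb hab] at this
  have := ha.2
  have := hb.2
  omega

lemma sup_eq (ha : Covers a ν) (hb : Covers b ν) (hab : a ≠ b) : a ⊔ b = ν := by
  obtain ⟨haν, ha⟩ := ha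
  obtain ⟨hbν, hb⟩ := hb
  refine eq_of_le_of_card_le (sup_le haν hbν) ?_
  by_contra! hlt
  have hsup : a = a ⊔ b := eq_of_le_of_card_le le_sup_left (by omega)
  exact hab (eq_of_le_of_card_le (sup_eq_left.mp hsup.symm) (by omega)).symm

lemma inf_covers (ha : Covers a ν) (hb : Covers b ν) (hab : a ≠ b) : Covers (a ⊓ b) a := by
  refine ⟨inf_le_left, ?_⟩
  have := card_sup_add_card_inf a b
  rw [ha.sup_eq hb hab] at this
  have := ha.2
  have := hb.2
  omega

end Covers

/-- Together with `shrink`, a total way to add (remove) the box `c`; it does exactly that when `c`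
is addable (removable). -/
def grow (μ : YoungDiagram) (c : ℕ × ℕ) : YoungDiagram where
  cells := μ.cells ∪ Finset.Iic c
  isLowerSet := by
    rw [Finset.coe_union, Finset.coe_Iic]
    exact μ.isLowerSet.union (isLowerSet_Iic c)

def shrink (μ : YoungDiagram) (c : ℕ × ℕ) : YoungDiagram where
  cells := μ.cells.filter fun x => ¬ c ≤ x
  isLowerSet := fun _ _ hyx hx => by
    simp only [Finset.coe_filter, Set.mem_ofPred_eq] at hx ⊢
    exact ⟨μ.isLowerSet hyx hx.1, fun hc => hx.2 (hc.trans hyx)⟩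

def IsAddable (μ : YoungDiagram) (c : ℕ × ℕ) : Prop := c ∉ μ ∧ ∀ d < c, d ∈ μ

def IsRemovable (μ : YoungDiagram) (c : ℕ × ℕ) : Prop := c ∈ μ ∧ ∀ d, c < d → d ∉ μ

lemma cells_grow (h : μ.IsAddable c) : (μ.grow c).cells = insert c μ.cells := by
  ext x
  simp only [grow, Finset.mem_union, Finset.mem_Iic, Finset.mem_insert, mem_cells]
  constructor
  · rintro (hx | hx)
    · exact Or.inr hx
    · rcases hx.eq_or_lt with rfl | hlt
      · exact Or.inl rfl
      · exact Or.inr (h.2 x hlt)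
  · rintro (rfl | hx)
    · exact Or.inr le_rfl
    · exact Or.inl hx

lemma cells_shrink (h : μ.IsRemovable c) : (μ.shrink c).cells = μ.cells.erase c := by
  ext x
  simp only [shrink, Finset.mem_filter, Finset.mem_erase, mem_cells]
  constructor
  · rintro ⟨hx, hcx⟩
    exact ⟨fun hxc => hcx (hxc ▸ le_rfl), hx⟩
  · rintro ⟨hxc, hx⟩
    exact ⟨hx, fun hcx => h.2 x (lt_of_le_of_ne hcx (Ne.symm hxc)) hx⟩

lemma covers_iff_exists_isAddable : Covers μ ν ↔ ∃ c, μ.IsAddable c ∧ μ.grow c = ν := by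
  constructor
  · rintro ⟨hle, hcard⟩
    obtain ⟨c, hcμ, hins⟩ := Finset.exists_eq_insert_iff.mpr ⟨cells_subset_iff.mpr hle, hcard.symm⟩
    have hcν : c ∈ ν := by rw [← mem_cells, ← hins]; exact Finset.mem_insert_self c _
    have hadd : μ.IsAddable c := by
      refine ⟨hcμ, fun d hdc => ?_⟩
      have hdν : d ∈ ν.cells := ν.isLowerSet hdc.le hcν
      rw [← hins, Finset.mem_insert] at hdν
      exact hdν.resolve_left hdc.ne
    exact ⟨c, hadd, YoungDiagram.ext (by rw [cells_grow hadd, hins])⟩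
  · rintro ⟨c, hadd, rfl⟩
    refine ⟨?_, ?_⟩
    · rw [← cells_subset_iff, cells_grow hadd]
      exact Finset.subset_insert c _
    · rw [YoungDiagram.card, cells_grow hadd, Finset.card_insert_of_notMem hadd.1]

lemma covers_iff_exists_isRemovable : Covers μ ν ↔ ∃ c, ν.IsRemovable c ∧ ν.shrink c = μ := by
  constructor
  · rintro ⟨hle, hcard⟩
    obtain ⟨c, hcμ, hins⟩ := Finset.exists_eq_insert_iff.mpr ⟨cells_subset_iff.mpr hle, hcard.symm⟩
    have hrem : ν.IsRemovable c := by
      refine ⟨by rw [← mem_cells, ← hins]; exact Finset.mem_insert_self c _, fun d hcd hdν => ?_⟩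
      rw [← mem_cells, ← hins, Finset.mem_insert] at hdν
      exact hcμ (μ.isLowerSet hcd.le (hdν.resolve_left hcd.ne'))
    exact ⟨c, hrem, YoungDiagram.ext (by rw [cells_shrink hrem, ← hins, Finset.erase_insert hcμ])⟩
  · rintro ⟨c, hrem, rfl⟩
    refine ⟨?_, ?_⟩
    · rw [← cells_subset_iff, cells_shrink hrem]
      exact Finset.erase_subset c _
    · rw [YoungDiagram.card, YoungDiagram.card, cells_shrink hrem,
        Finset.card_erase_add_one hrem.1]

lemma grow_injOn : Set.InjOn μ.grow {c | μ.IsAddable c} := by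
  intro c hc d hd hcd
  have hmem : c ∈ (μ.grow d).cells := by rw [← hcd, cells_grow hc]; exact Finset.mem_insert_self c _
  rw [cells_grow hd, Finset.mem_insert] at hmem
  exact hmem.resolve_right hc.1

lemma shrink_injOn : Set.InjOn μ.shrink {c | μ.IsRemovable c} := by
  intro c hc d hd hcd
  by_contra hne
  have hmem : c ∈ (μ.shrink d).cells := by
    rw [cells_shrink hd]; exact Finset.mem_erase.mpr ⟨hne, hc.1⟩
  rw [← hcd, cells_shrink hc] at hmem
  exact Finset.notMem_erase c _ hmem

lemma poch_grow (w : ℂ) (h : μ.IsAddable c) : poch w μ (μ.grow c) = w + c.2 - c.1 := by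
  rw [poch, cells_grow h, Finset.insert_sdiff_cancel (by simpa using h.1), Finset.prod_singleton]

lemma poch_shrink (w : ℂ) (h : μ.IsRemovable c) : poch w (μ.shrink c) μ = w + c.2 - c.1 := by
  rw [poch, cells_shrink h, Finset.sdiff_erase_self h.1, Finset.prod_singleton]

lemma lt_colLen_zero_of_rowLen_pos {i : ℕ} (h : 0 < μ.rowLen i) : i < μ.colLen 0 :=
  mem_iff_lt_colLen.mp (mem_iff_lt_rowLen.mpr h)

def removableRows (μ : YoungDiagram) : Finset ℕ :=
  (Finset.range (μ.colLen 0)).filter fun i => μ.rowLen (i + 1) < μ.rowLen i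

/-- A cell can be added at the end of row `0`, and of row `i + 1` exactly when row `i` ends in a
removable cell. -/
def addableRows (μ : YoungDiagram) : Finset ℕ :=
  insert 0 (μ.removableRows.image (· + 1))

lemma mem_removableRows {i : ℕ} : i ∈ μ.removableRows ↔ μ.rowLen (i + 1) < μ.rowLen i := by
  rw [removableRows, Finset.mem_filter, Finset.mem_range, and_iff_right_iff_imp]
  exact fun h => lt_colLen_zero_of_rowLen_pos (Nat.zero_lt_of_lt h)

lemma isAddable_iff {i j : ℕ} : μ.IsAddable (i, j) ↔ i ∈ μ.addableRows ∧ j = μ.rowLen i := by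
  simp only [IsAddable, addableRows, Finset.mem_insert, Finset.mem_image, mem_removableRows,
    mem_iff_lt_rowLen, not_lt]
  constructor
  · rintro ⟨hj, hlt⟩
    have hj : j = μ.rowLen i := by
      refine le_antisymm ?_ hj
      rcases j with _ | j
      · exact Nat.zero_le _
      · exact mem_iff_lt_rowLen.mp (hlt (i, j) (Prod.mk_lt_mk.mpr (Or.inr ⟨le_rfl, j.lt_succ_self⟩)))
    refine ⟨?_, hj⟩
    rcases i with _ | k
    · exact Or.inl rfl
    · refine Or.inr ⟨k, hj ▸ mem_iff_lt_rowLen.mp (hlt (k, j) ?_), rfl⟩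
      exact Prod.mk_lt_mk.mpr (Or.inl ⟨k.lt_succ_self, le_rfl⟩)
  · rintro ⟨hi, rfl⟩
    refine ⟨le_rfl, fun ⟨i', j'⟩ hlt => mem_iff_lt_rowLen.mpr ?_⟩
    rcases Prod.mk_lt_mk.mp hlt with ⟨hi', hj'⟩ | ⟨hi', hj'⟩
    · obtain ⟨k, hk, rfl⟩ := hi.resolve_left (Nat.ne_zero_of_lt hi')
      exact hj'.trans_lt (hk.trans_le (μ.rowLen_anti i' k (Nat.le_of_lt_succ hi')))
    · exact hj'.trans_le (μ.rowLen_anti i' i hi')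

lemma isRemovable_iff {i j : ℕ} :
    μ.IsRemovable (i, j) ↔ i ∈ μ.removableRows ∧ j + 1 = μ.rowLen i := by
  simp only [IsRemovable, mem_removableRows, mem_iff_lt_rowLen]
  constructor
  · rintro ⟨hj, hgt⟩
    have hright := hgt (i, j + 1) (Prod.mk_lt_mk.mpr (Or.inr ⟨le_rfl, j.lt_succ_self⟩))
    have hbelow := hgt (i + 1, j) (Prod.mk_lt_mk.mpr (Or.inl ⟨i.lt_succ_self, le_rfl⟩))
    rw [mem_iff_lt_rowLen] at hright hbelow
    omega
  · rintro ⟨hi, hj⟩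
    refine ⟨by omega, fun ⟨i', j'⟩ hlt => ?_⟩
    rw [mem_iff_lt_rowLen]
    rcases Prod.mk_lt_mk.mp hlt with ⟨hi', hj'⟩ | ⟨hi', hj'⟩
    · have := μ.rowLen_anti (i + 1) i' hi'
      omega
    · have := μ.rowLen_anti i i' hi'
      omega

def upCovers (μ : YoungDiagram) : Finset YoungDiagram :=
  μ.addableRows.image fun i => μ.grow (i, μ.rowLen i)

def downCovers (μ : YoungDiagram) : Finset YoungDiagram :=
  μ.removableRows.image fun i => μ.shrink (i, μ.rowLen i - 1)

lemma mem_upCovers : ν ∈ μ.upCovers ↔ Covers μ ν := by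
  rw [upCovers, Finset.mem_image, covers_iff_exists_isAddable]
  constructor
  · rintro ⟨i, hi, rfl⟩
    exact ⟨_, isAddable_iff.mpr ⟨hi, rfl⟩, rfl⟩
  · rintro ⟨⟨i, j⟩, hadd, rfl⟩
    obtain ⟨hi, rfl⟩ := isAddable_iff.mp hadd
    exact ⟨i, hi, rfl⟩

lemma isRemovable_of_mem_removableRows {i : ℕ} (hi : i ∈ μ.removableRows) :
    μ.IsRemovable (i, μ.rowLen i - 1) :=
  isRemovable_iff.mpr ⟨hi, Nat.sub_add_cancel (Nat.zero_lt_of_lt (mem_removableRows.mp hi))⟩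

lemma mem_downCovers : μ ∈ ν.downCovers ↔ Covers μ ν := by
  rw [downCovers, Finset.mem_image, covers_iff_exists_isRemovable]
  constructor
  · rintro ⟨i, hi, rfl⟩
    exact ⟨_, isRemovable_of_mem_removableRows hi, rfl⟩
  · rintro ⟨⟨i, j⟩, hrem, rfl⟩
    obtain ⟨hi, hj⟩ := isRemovable_iff.mp hrem
    exact ⟨i, hi, by rw [← hj, Nat.add_sub_cancel]⟩

lemma sum_upCovers {M : Type*} [AddCommMonoid M] (f : YoungDiagram → M) :
    ∑ ν ∈ μ.upCovers, f ν = ∑ i ∈ μ.addableRows, f (μ.grow (i, μ.rowLen i)) := by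
  refine Finset.sum_image fun i hi k hk hik => ?_
  have := grow_injOn (μ := μ) (isAddable_iff.mpr ⟨hi, rfl⟩) (isAddable_iff.mpr ⟨hk, rfl⟩) hik
  exact (Prod.ext_iff.mp this).1

lemma sum_downCovers {M : Type*} [AddCommMonoid M] (f : YoungDiagram → M) :
    ∑ κ ∈ μ.downCovers, f κ = ∑ i ∈ μ.removableRows, f (μ.shrink (i, μ.rowLen i - 1)) := by
  refine Finset.sum_image fun i hi k hk hik => ?_
  exact (Prod.ext_iff.mp (shrink_injOn (isRemovable_of_mem_removableRows hi)
    (isRemovable_of_mem_removableRows hk) hik)).1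

lemma sum_downCovers_sum_upCovers_erase {M : Type*} [AddCommMonoid M] (μ : YoungDiagram)
    (g : YoungDiagram → YoungDiagram → M) :
    ∑ κ ∈ μ.downCovers, ∑ ν ∈ κ.upCovers.erase μ, g κ ν =
      ∑ ν ∈ μ.upCovers, ∑ κ ∈ ν.downCovers.erase μ, g (μ ⊓ κ) κ := by
  rw [Finset.sum_sigma', Finset.sum_sigma']
  refine Finset.sum_nbij' (fun p => ⟨μ ⊔ p.2, p.2⟩) (fun p => ⟨μ ⊓ p.2, p.2⟩) ?_ ?_ ?_ ?_ ?_ <;>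
    simp only [Finset.mem_sigma, Finset.mem_erase, mem_upCovers, mem_downCovers]
  · rintro ⟨κ, ν⟩ ⟨hκμ, hνμ, hκν⟩
    exact ⟨hκμ.covers_sup hκν (Ne.symm hνμ), hνμ, sup_comm μ ν ▸ hκν.covers_sup hκμ hνμ⟩
  · rintro ⟨ν, κ⟩ ⟨hμν, hκμ, hκν⟩
    exact ⟨hμν.inf_covers hκν (Ne.symm hκμ), hκμ, inf_comm μ κ ▸ hκν.inf_covers hμν hκμ⟩
  · rintro ⟨κ, ν⟩ ⟨hκμ, hνμ, hκν⟩
    rw [hκμ.inf_eq hκν (Ne.symm hνμ)]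
  · rintro ⟨ν, κ⟩ ⟨hμν, hκμ, hκν⟩
    rw [hμν.sup_eq hκν (Ne.symm hκμ)]
  · rintro ⟨κ, ν⟩ ⟨hκμ, hνμ, hκν⟩
    rw [hκμ.inf_eq hκν (Ne.symm hνμ)]

lemma rowLen_colLen_zero (μ : YoungDiagram) : μ.rowLen (μ.colLen 0) = 0 :=
  Nat.eq_zero_of_not_pos fun h => (lt_colLen_zero_of_rowLen_pos h).false

lemma card_eq_sum_rowLen (μ : YoungDiagram) :
    μ.card = ∑ i ∈ Finset.range (μ.colLen 0), μ.rowLen i := by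
  rw [YoungDiagram.card,
    Finset.card_eq_sum_card_fiberwise (f := Prod.fst) (t := Finset.range (μ.colLen 0))]
  · simp only [rowLen_eq_card, row]
  · intro c hc
    exact Finset.mem_range.mpr (mem_iff_lt_colLen.mp (μ.up_left_mem le_rfl (Nat.zero_le _) hc))

lemma sum_addableRows_sub_sum_removableRows {G : Type*} [AddCommGroup G] (f : ℤ → G) :
    ∑ i ∈ μ.addableRows, f (μ.rowLen i - i) - ∑ i ∈ μ.removableRows, f (μ.rowLen i - i - 1) =
      f (-μ.colLen 0) +
        ∑ i ∈ Finset.range (μ.colLen 0), (f (μ.rowLen i - i) - f (μ.rowLen i - i - 1)) := by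
  set a : ℕ → ℤ := fun i => μ.rowLen i - i with ha
  have hzero : (0 : ℕ) ∉ μ.removableRows.image (· + 1) := by simp
  rw [addableRows, Finset.sum_insert hzero, Finset.sum_image fun _ _ _ _ => Nat.succ_inj.mp,
    add_sub_assoc, ← Finset.sum_sub_distrib]
  -- When rows `i` and `i + 1` have equal length, `a (i + 1) = a i - 1` and the summand vanishes.
  have hextend : ∑ i ∈ μ.removableRows, (f (a (i + 1)) - f (a i - 1)) =
      ∑ i ∈ Finset.range (μ.colLen 0), (f (a (i + 1)) - f (a i - 1)) := by
    refine Finset.sum_subset (Finset.filter_subset _ _) fun i _ hi => ?_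
    have hlen : μ.rowLen (i + 1) = μ.rowLen i :=
      (μ.rowLen_anti i (i + 1) i.le_succ).antisymm (not_lt.mp (mem_removableRows.not.mp hi))
    simp only [ha, hlen]
    push_cast
    rw [sub_add_eq_sub_sub, sub_self]
  have htelescope := Finset.sum_range_sub (fun i => f (a i)) (μ.colLen 0)
  have hlast : a (μ.colLen 0) = -μ.colLen 0 := by simp [ha, rowLen_colLen_zero]
  rw [hextend, ← hlast, ← eq_sub_iff_add_eq.mp htelescope, add_comm _ (f (a 0)), add_assoc,
    ← Finset.sum_add_distrib]
  congr 1
  refine Finset.sum_congr rfl fun i _ => ?_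
  abel

lemma sum_upCovers_sub_sum_downCovers (z z' : ℂ) (μ : YoungDiagram) :
    ∑ ν ∈ μ.upCovers, poch z μ ν * poch z' μ ν - ∑ κ ∈ μ.downCovers, poch z κ μ * poch z' κ μ =
      z * z' + 2 * μ.card := by
  set f : ℤ → ℂ := fun k => (z + k) * (z' + k) with hf
  have hup : ∑ ν ∈ μ.upCovers, poch z μ ν * poch z' μ ν =
      ∑ i ∈ μ.addableRows, f (μ.rowLen i - i) := by
    rw [sum_upCovers]
    refine Finset.sum_congr rfl fun i hi => ?_
    have hadd : μ.IsAddable (i, μ.rowLen i) := isAddable_iff.mpr ⟨hi, rfl⟩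
    rw [poch_grow z hadd, poch_grow z' hadd, hf]
    push_cast
    ring
  have hdown : ∑ κ ∈ μ.downCovers, poch z κ μ * poch z' κ μ =
      ∑ i ∈ μ.removableRows, f (μ.rowLen i - i - 1) := by
    rw [sum_downCovers]
    refine Finset.sum_congr rfl fun i hi => ?_
    have hpos : 1 ≤ μ.rowLen i := Nat.zero_lt_of_lt (mem_removableRows.mp hi)
    rw [poch_shrink z (isRemovable_of_mem_removableRows hi),
      poch_shrink z' (isRemovable_of_mem_removableRows hi), hf]
    push_cast [hpos]
    ring
  -- `f a - f (a - 1)` is affine in `a`, so the sum telescopes along the diagonal `a = -i`.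
  have hstep : ∀ i : ℕ, f (μ.rowLen i - i) - f (μ.rowLen i - i - 1) =
      (f (-i) - f (-(i + 1 : ℕ))) + 2 * μ.rowLen i := by
    intro i
    simp only [hf]
    push_cast
    ring
  rw [hup, hdown, sum_addableRows_sub_sum_removableRows, Finset.sum_congr rfl fun i _ => hstep i,
    Finset.sum_add_distrib, Finset.sum_range_sub' (fun i : ℕ => f (-i)), ← Finset.mul_sum,
    card_eq_sum_rowLen, Nat.cast_sum, hf]
  push_cast
  ring

end YoungDiagram

open YoungDiagram

lemma Eop_single (z z' : ℂ) (μ : YoungDiagram) :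
    Eop z z' (Finsupp.single μ 1) =
      ∑ ν ∈ μ.upCovers, (poch z μ ν * poch z' μ ν) • Finsupp.single ν 1 := by
  simp_rw [Eop, Finsupp.lsum_single, LinearMap.toSpanSingleton_apply_one, ← mem_upCovers]
  exact finsum_mem_finset_eq_sum _ _

lemma Fop_single (μ : YoungDiagram) :
    Fop (Finsupp.single μ 1) = -∑ κ ∈ μ.downCovers, Finsupp.single κ 1 := by
  simp_rw [Fop, Finsupp.lsum_single, LinearMap.toSpanSingleton_apply_one, ← mem_downCovers]
  rw [finsum_mem_finset_eq_sum]

lemma Hop_single (z z' : ℂ) (μ : YoungDiagram) :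
    Hop z z' (Finsupp.single μ 1) = (z * z' + 2 * μ.card) • Finsupp.single μ 1 := by
  rw [Hop, Finsupp.lsum_single, LinearMap.toSpanSingleton_apply_one]

lemma Hop_comp_Eop_sub_Eop_comp_Hop (z z' : ℂ) :
    Hop z z' ∘ₗ Eop z z' - Eop z z' ∘ₗ Hop z z' = (2 : ℂ) • Eop z z' := by
  ext μ : 2
  simp only [LinearMap.sub_apply, LinearMap.comp_apply, LinearMap.smul_apply,
    Finsupp.lsingle_apply]
  rw [Hop_single, map_smul, Eop_single, map_sum, Finset.smul_sum, Finset.smul_sum,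
    ← Finset.sum_sub_distrib]
  refine Finset.sum_congr rfl fun ν hν => ?_
  rw [map_smul, Hop_single, (mem_upCovers.mp hν).2, smul_comm, ← sub_smul]
  congr 1
  push_cast
  ring

lemma Hop_comp_Fop_sub_Fop_comp_Hop (z z' : ℂ) :
    Hop z z' ∘ₗ Fop - Fop ∘ₗ Hop z z' = -((2 : ℂ) • Fop) := by
  ext μ : 2
  simp only [LinearMap.sub_apply, LinearMap.comp_apply, LinearMap.smul_apply,
    LinearMap.neg_apply, Finsupp.lsingle_apply]
  rw [Hop_single, map_smul, Fop_single, map_neg, map_sum, smul_neg, smul_neg, neg_neg, sub_neg_eq_add, Finset.smul_sum, Finset.smul_sum,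
    ← Finset.sum_neg_distrib, ← Finset.sum_add_distrib]
  refine Finset.sum_congr rfl fun κ hκ => ?_
  rw [Hop_single, (mem_downCovers.mp hκ).2, ← neg_smul, ← add_smul]
  congr 1
  push_cast
  ring

lemma Eop_comp_Fop_sub_Fop_comp_Eop (z z' : ℂ) :
    Eop z z' ∘ₗ Fop - Fop ∘ₗ Eop z z' = Hop z z' := by
  ext μ : 2
  simp only [LinearMap.sub_apply, LinearMap.comp_apply, Finsupp.lsingle_apply]
  set c : YoungDiagram → YoungDiagram → ℂ := fun κ ν => poch z κ ν * poch z' κ ν with hc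
  have hEF : Eop z z' (Fop (Finsupp.single μ 1)) =
      -((∑ κ ∈ μ.downCovers, c κ μ) • Finsupp.single μ 1 +
        ∑ κ ∈ μ.downCovers, ∑ ν ∈ κ.upCovers.erase μ, c κ ν • Finsupp.single ν 1) := by
    rw [Fop_single, map_neg, map_sum, Finset.sum_smul, ← Finset.sum_add_distrib]
    congr 1
    refine Finset.sum_congr rfl fun κ hκ => ?_
    rw [Eop_single, ← Finset.add_sum_erase _ _ (mem_upCovers.mpr (mem_downCovers.mp hκ))]
  have hFE : Fop (Eop z z' (Finsupp.single μ 1)) =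
      -((∑ ν ∈ μ.upCovers, c μ ν) • Finsupp.single μ 1 +
        ∑ ν ∈ μ.upCovers, ∑ κ ∈ ν.downCovers.erase μ, c μ ν • Finsupp.single κ 1) := by
    rw [Eop_single, map_sum, Finset.sum_smul, ← Finset.sum_add_distrib, ← Finset.sum_neg_distrib]
    refine Finset.sum_congr rfl fun ν hν => ?_
    rw [map_smul, Fop_single, ← Finset.add_sum_erase _ _ (mem_downCovers.mpr (mem_upCovers.mp hν)),
      smul_neg, smul_add, Finset.smul_sum]
  have hcross : ∑ κ ∈ μ.downCovers, ∑ ν ∈ κ.upCovers.erase μ, c κ ν • Finsupp.single ν 1 =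
      ∑ ν ∈ μ.upCovers, ∑ κ ∈ ν.downCovers.erase μ, c μ ν • Finsupp.single κ (1 : ℂ) := by
    rw [sum_downCovers_sum_upCovers_erase]
    refine Finset.sum_congr rfl fun ν hν => Finset.sum_congr rfl fun κ hκ => ?_
    obtain ⟨hκμ, hκν⟩ := Finset.mem_erase.mp hκ
    simp only [hc, poch_inf_left]
    rw [(mem_upCovers.mp hν).sup_eq (mem_downCovers.mp hκν) (Ne.symm hκμ)]
  rw [hEF, hFE, hcross, Hop_single, ← sum_upCovers_sub_sum_downCovers, sub_smul]
  abel

/-- The operators `E, F, H` on the space of finitely supported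
functions on Young diagrams satisfy the `sl(2,ℂ)` commutation relations. -/
theorem sl2_relations_on_young_diagrams (z z' : ℂ) :
    (Hop z z' ∘ₗ Eop z z' - Eop z z' ∘ₗ Hop z z' = (2 : ℂ) • Eop z z') ∧
      (Hop z z' ∘ₗ Fop - Fop ∘ₗ Hop z z' = -((2 : ℂ) • Fop)) ∧
      (Eop z z' ∘ₗ Fop - Fop ∘ₗ Eop z z' = Hop z z') :=
  ⟨Hop_comp_Eop_sub_Eop_comp_Hop z z', Hop_comp_Fop_sub_Fop_comp_Hop z z',
    Eop_comp_Fop_sub_Fop_comp_Eop z z'⟩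
end

section
/- Let W be a finite-dimensional complex vector space and let E, F, H be linear endomorphisms of W satisfying the sl(2,ℂ) relations E∘F − F∘E = H, H∘E − E∘H = 2E, H∘F − F∘H = −2F. Then F ∘ exp(E) = exp(E) ∘ (F − H − E), where exp(E) = ∑_{k≥0} E^k/k! is the operator exponential. -/
/-!
With `L`, `R` left and right multiplication by `x` and `D = R - L = ⁅·, x⁆`, the operators `L`
and `D` commute, so `y * exp x = exp (L + D) y = exp x * exp D y`. When `D³ y = 0` the series
`exp D y` stops after `y + D y + D² y / 2`. For an `sl₂`-triple, `D F = -H`, `D² F = -2E` and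
`D³ F = 0`, which gives `F * exp E = exp E * (F - H - E)`.
-/

open NormedSpace

section

variable {𝕂 𝔸 M : Type*} [RCLike 𝕂] [NormedRing 𝔸] [NormedAlgebra 𝕂 𝔸]

theorem mul_pow_apply (x y : 𝔸) (n : ℕ) : (ContinuousLinearMap.mul 𝕂 𝔸 x ^ n) y = x ^ n * y := by
  induction n with
  | zero => simp
  | succ n ih => simp [pow_succ', ih, mul_assoc]

theorem mul_flip_pow_apply (x y : 𝔸) (n : ℕ) :
    ((ContinuousLinearMap.mul 𝕂 𝔸).flip x ^ n) y = y * x ^ n := by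
  induction n with
  | zero => simp
  | succ n ih => simp [pow_succ', ih, mul_assoc, pow_mul_comm']

variable [CompleteSpace 𝔸] [NormedAddCommGroup M] [NormedSpace 𝕂 M] [CompleteSpace M]

theorem exp_apply_eq_of_pow_apply (T : M →L[𝕂] M) (m : M) (f : 𝔸 →L[𝕂] M) (x : 𝔸)
    (h : ∀ n, (T ^ n) m = f (x ^ n)) : exp T m = f (exp x) := by
  refine ((exp_series_hasSum_exp' (𝕂 := 𝕂) T).mapL (ContinuousLinearMap.apply 𝕂 M m)).unique ?_
  simpa [h] using (exp_series_hasSum_exp' (𝕂 := 𝕂) x).mapL f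

theorem exp_apply_eq_sum_of_pow_apply_eq_zero (T : M →L[𝕂] M) (m : M) {n : ℕ}
    (h : (T ^ n) m = 0) : exp T m = ∑ k ∈ Finset.range n, (k.factorial : 𝕂)⁻¹ • (T ^ k) m := by
  refine ((exp_series_hasSum_exp' (𝕂 := 𝕂) T).mapL (ContinuousLinearMap.apply 𝕂 M m)).unique ?_
  refine hasSum_sum_of_ne_finset_zero fun k hk => ?_
  obtain ⟨j, rfl⟩ := Nat.exists_eq_add_of_le (not_lt.mp (Finset.mem_range.not.mp hk))
  simp [add_comm n, pow_add, mul_apply_eq_comp, h]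

theorem mul_exp_eq_exp_mul_of_lie_lie_lie_eq_zero (x y : 𝔸) (h : ⁅⁅⁅y, x⁆, x⁆, x⁆ = 0) :
    y * exp x = exp x * (y + ⁅y, x⁆ + (2 : 𝕂)⁻¹ • ⁅⁅y, x⁆, x⁆) := by
  set L := ContinuousLinearMap.mul 𝕂 𝔸 x
  set D := (ContinuousLinearMap.mul 𝕂 𝔸).flip x - L
  have hD : ∀ z, D z = ⁅z, x⁆ := fun z => by simp [D, L, Ring.lie_def]
  have hLD : Commute L D := by
    ext z
    simp [D, L, mul_sub, sub_mul, mul_assoc]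
  -- `exp_add_of_commute` would need a `NormedAlgebra ℚ` instance on `𝔸 →L[𝕂] 𝔸`.
  have hball : ∀ T : 𝔸 →L[𝕂] 𝔸, T ∈ Metric.eball 0 (expSeries 𝕂 (𝔸 →L[𝕂] 𝔸)).radius := by
    simp [expSeries_radius_eq_top]
  calc y * exp x = exp (L + D) y := by
        rw [add_sub_cancel]
        exact (exp_apply_eq_of_pow_apply _ y (ContinuousLinearMap.mul 𝕂 𝔸 y) x
          (mul_flip_pow_apply x y)).symm
    _ = exp x * exp D y := by
        rw [exp_add_of_commute_of_mem_ball hLD (hball L) (hball D)]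
        exact exp_apply_eq_of_pow_apply _ _ ((ContinuousLinearMap.mul 𝕂 𝔸).flip (exp D y)) x
          (mul_pow_apply x _)
    _ = exp x * (y + ⁅y, x⁆ + (2 : 𝕂)⁻¹ • ⁅⁅y, x⁆, x⁆) := by
        rw [exp_apply_eq_sum_of_pow_apply_eq_zero D y (n := 3) (by simp [pow_succ, hD, h])]
        simp [Finset.sum_range_succ, hD, Nat.factorial]

end

theorem sl2_exp_conjugation_general
    (W : Type*) [NormedAddCommGroup W] [NormedSpace ℂ W] [FiniteDimensional ℂ W]
    (E F H : W →L[ℂ] W)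
    (hEF : E * F - F * E = H)
    (hHE : H * E - E * H = 2 • E) :
    F * NormedSpace.exp E = NormedSpace.exp E * (F - H - E) := by
  have h1 : ⁅F, E⁆ = -H := by rw [Ring.lie_def, ← hEF, neg_sub]
  have h2 : ⁅⁅F, E⁆, E⁆ = -(2 • E) := by rw [h1, Ring.lie_def, ← hHE]; noncomm_ring
  have h3 : ⁅⁅⁅F, E⁆, E⁆, E⁆ = 0 := by rw [h2, Ring.lie_def]; noncomm_ring
  rw [mul_exp_eq_exp_mul_of_lie_lie_lie_eq_zero (𝕂 := ℂ) E F h3, h2, h1]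
  congr 1
  module

/-- If `E, F, H` are endomorphisms of a finite-dimensional complex
vector space satisfying the `sl(2,ℂ)` relations, then `F ∘ exp(E) = exp(E) ∘ (F - H - E)`. -/
theorem sl2_exp_conjugation
    (W : Type*) [NormedAddCommGroup W] [NormedSpace ℂ W] [FiniteDimensional ℂ W]
    (E F H : W →L[ℂ] W)
    (hEF : E * F - F * E = H)
    (hHE : H * E - E * H = 2 • E)
    (hHF : H * F - F * H = -(2 • F)) :
    F * NormedSpace.exp E = NormedSpace.exp E * (F - H - E) :=
  sl2_exp_conjugation_general W E F H hEF hHE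
end
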